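/- arXiv:1911.12098 — 11 statements merged into one kernel-verified Lean document; each statement's English description precedes it below -/
import Mathlib

section
/- Let t ≥ 1 and let c = (c_0,…,c_{t−1}) ∈ ℤ^t with Σ c_j = 0. Define the t-core partition λ_c by its arm and leg sets: for each j with c_j ≥ 0, the arms congruent to j mod t are {qt + j : 0 ≤ q ≤ c_j − 1} and there are no legs congruent to t−j−1 mod t; for each j with c_j ≤ 0, the legs congruent to t−j−1 mod t are {qt + t−j−1 : 0 ≤ q ≤ |c_j| − 1} and there are no arms congruent to j mod t. Then |λ_c| = (t/2)·Σ_{j=0}^{t−1} c_j² + Σ_{j=0}^{t−1} j·c_j. -/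
/-!
The arms (resp. legs) of `λ_c` in residue class `j` (resp. `t - j - 1`) mod `t` form an arithmetic
progression of length `c_j⁺` (resp. `c_j⁻`), and distinct classes are disjoint, so the size splits
as a sum over `j`. Summing the two progressions by Gauss' formula, and using that at most one of
`c_j⁺, c_j⁻` is nonzero, the contribution of class `j` is `(t/2) c_j² + j c_j + (1 - t/2) c_j`;
the last term sums to zero because `∑ c_j = 0`.
-/

open Finset

lemma two_mul_sum_range_mul_add {R : Type*} [CommRing R] (n : ℕ) (t r : R) :
    2 * ∑ q ∈ range n, ((q : R) * t + r) = n * (n - 1) * t + 2 * n * r := by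
  induction n with
  | zero => simp
  | succ k ih =>
    rw [sum_range_succ, mul_add, ih]
    push_cast
    ring

section ResidueClass

variable {t r : ℕ}

lemma mul_add_injective_of_lt (hr : r < t) : Function.Injective fun q : ℕ => q * t + r :=
  (add_left_injective r).comp (mul_left_injective₀ (r.zero_le.trans_lt hr).ne')

lemma card_image_mul_add (hr : r < t) (n : ℕ) :
    ((range n).image fun q => q * t + r).card = n := by
  rw [card_image_of_injective _ (mul_add_injective_of_lt hr), card_range]

lemma two_mul_sum_image_mul_add (hr : r < t) (n : ℕ) :
    2 * ((∑ a ∈ (range n).image (fun q => q * t + r), a : ℕ) : ℤ)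
      = n * (n - 1) * t + 2 * n * r := by
  rw [sum_image (mul_add_injective_of_lt hr).injOn]
  push_cast
  exact two_mul_sum_range_mul_add n _ _

lemma disjoint_image_mul_add {s : ℕ} (A B : Finset ℕ) (hr : r < t) (hs : s < t) (hrs : r ≠ s) :
    Disjoint (A.image fun q => q * t + r) (B.image fun q => q * t + s) := by
  simp only [disjoint_left, mem_image, not_exists, not_and]
  rintro _ ⟨q, -, rfl⟩ q' - h
  apply hrs
  rw [← Nat.mul_add_mod_of_lt (a := q) hr, ← h, Nat.mul_add_mod_of_lt hs]

lemma pairwiseDisjoint_image_mul_add (n g : ℕ → ℕ) (hg : ∀ j < t, g j < t)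
    (hg_inj : ∀ i < t, ∀ j < t, g i = g j → i = j) :
    (range t : Set ℕ).PairwiseDisjoint fun j => (range (n j)).image fun q => q * t + g j := by
  intro i hi j hj hij
  simp only [coe_range, Set.mem_Iio] at hi hj
  exact disjoint_image_mul_add _ _ (hg i hi) (hg j hj) fun h => hij (hg_inj i hi j hj h)

end ResidueClass

lemma two_mul_size_residueClass {t j : ℕ} (hj : j < t) (c : ℤ) :
    2 * ((((range c.toNat).image fun q => q * t + j).card
        + ∑ a ∈ (range c.toNat).image (fun q => q * t + j), a
        + ∑ l ∈ (range (-c).toNat).image (fun q => q * t + (t - j - 1)), l : ℕ) : ℤ)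
      = t * c ^ 2 + 2 * (j * c) + (2 - t) * c := by
  have hleg : t - j - 1 < t := by omega
  have harms := two_mul_sum_image_mul_add hj c.toNat
  have hlegs := two_mul_sum_image_mul_add hleg (-c).toNat
  have hcast : ((t - j - 1 : ℕ) : ℤ) = t - j - 1 := by omega
  have hsplit : (c.toNat : ℤ) - (-c).toNat = c := Int.toNat_sub_toNat_neg c
  have hone_zero : (c.toNat : ℤ) * (-c).toNat = 0 := by
    rcases le_total c 0 with h | h
    · simp [Int.toNat_eq_zero.mpr h]
    · simp [Int.toNat_eq_zero.mpr (neg_nonpos.mpr h)]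
  rw [hcast] at hlegs
  rw [card_image_mul_add hj]
  push_cast at harms hlegs ⊢
  conv_rhs => rw [← hsplit]
  linear_combination harms + hlegs + 2 * (t : ℤ) * hone_zero

theorem tcore_size_general
    (t : ℕ) (c : ℕ → ℤ)
    (hsum : ∑ j ∈ Finset.range t, c j = 0) :
    2 * (((((Finset.range t).biUnion fun j =>
              (Finset.range (c j).toNat).image fun q => q * t + j).card
          + ∑ a ∈ ((Finset.range t).biUnion fun j =>
              (Finset.range (c j).toNat).image fun q => q * t + j), a
          + ∑ l ∈ ((Finset.range t).biUnion fun j =>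
              (Finset.range (-c j).toNat).image fun q => q * t + (t - j - 1)), l : ℕ)) : ℤ)
      = t * ∑ j ∈ Finset.range t, c j ^ 2
        + 2 * ∑ j ∈ Finset.range t, (j : ℤ) * c j := by
  have harms := pairwiseDisjoint_image_mul_add (t := t) (fun j => (c j).toNat) (fun j => j)
    (fun _ hj => hj) (fun _ _ _ _ h => h)
  have hlegs := pairwiseDisjoint_image_mul_add (t := t) (fun j => (-c j).toNat) (fun j => t - j - 1)
    (fun _ _ => by omega) (fun _ hi _ hj h => by omega)
  rw [card_biUnion harms, sum_biUnion harms, sum_biUnion hlegs, ← sum_add_distrib,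
    ← sum_add_distrib, Nat.cast_sum, mul_sum,
    sum_congr rfl fun j hj => two_mul_size_residueClass (mem_range.mp hj) (c j)]
  simp only [sum_add_distrib, ← mul_sum, hsum, mul_zero, add_zero]

/-- Let `t ≥ 1` and `c : ℕ → ℤ` with `∑_{j<t} c j = 0`. The `t`-core
partition `λ_c` has arm set `A = ⋃_{c j > 0} {q*t + j : 0 ≤ q < c j}` and leg set
`L = ⋃_{c j < 0} {q*t + (t-j-1) : 0 ≤ q < |c j|}`, and its size is
`|A| + ∑ A + ∑ L`. Then `|λ_c| = (t/2) ∑ (c j)² + ∑ j * c j`, stated here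
multiplied through by `2`. -/
theorem tcore_size
    (t : ℕ) (ht : 0 < t) (c : ℕ → ℤ)
    (hsum : ∑ j ∈ Finset.range t, c j = 0) :
    2 * (((((Finset.range t).biUnion fun j =>
              (Finset.range (c j).toNat).image fun q => q * t + j).card
          + ∑ a ∈ ((Finset.range t).biUnion fun j =>
              (Finset.range (c j).toNat).image fun q => q * t + j), a
          + ∑ l ∈ ((Finset.range t).biUnion fun j =>
              (Finset.range (-c j).toNat).image fun q => q * t + (t - j - 1)), l : ℕ)) : ℤ)
      = t * ∑ j ∈ Finset.range t, c j ^ 2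
        + 2 * ∑ j ∈ Finset.range t, (j : ℤ) * c j :=
  tcore_size_general t c hsum
end

section
/- Let t ≥ 1 and let λ be a partition with characteristic vector c(λ) = (c_0,…,c_{t−1}) and t-quotient (λ^0,…,λ^{t−1}). Then the conjugate partition λ* has characteristic vector (−c_{t−1},…,−c_0) and t-quotient ((λ^{t−1})*,…,(λ^0)*). -/
/-- The size of the partition with Frobenius symbol `(L | A)` (arm set `A`, leg set `L`). -/
def frobSize (A L : Finset ℕ) : ℕ := A.card + ∑ a ∈ A, a + ∑ l ∈ L, l

/-- Quotients of the arms of residue `j` mod `t` (positions on runner `j`). -/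
def armRunner (t : ℕ) (A : Finset ℕ) (j : ℕ) : Finset ℕ :=
  (A.filter fun a => a % t = j).image fun a => a / t

/-- Quotients of the legs of residue `t - j - 1` mod `t` (positions on runner `j`). -/
def legRunner (t : ℕ) (L : Finset ℕ) (j : ℕ) : Finset ℕ :=
  (L.filter fun l => l % t = t - j - 1).image fun l => l / t

/-- The `j`-th entry of the characteristic vector of the partition with arm set
`A` and leg set `L`. -/
def charVec (t : ℕ) (A L : Finset ℕ) (j : ℕ) : ℤ :=
  ((armRunner t A j).card : ℤ) - (legRunner t L j).card

/-- The arm set of the `j`-th partition of the `t`-quotient of the partition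
with arm set `A` and leg set `L`. -/
def quotArm (t : ℕ) (A L : Finset ℕ) (j : ℕ) : Finset ℕ :=
  let c := charVec t A L j
  if 0 ≤ c then
    ((armRunner t A j).filter fun a => c.toNat ≤ a).image fun a => a - c.toNat
  else
    ((armRunner t A j).image fun a => a + (-c).toNat) ∪
      ((Finset.range (-c).toNat \ legRunner t L j).image fun a => (-c).toNat - a - 1)

/-- The leg set of the `j`-th partition of the `t`-quotient of the partition
with arm set `A` and leg set `L`. -/
def quotLeg (t : ℕ) (A L : Finset ℕ) (j : ℕ) : Finset ℕ :=
  let c := charVec t A L j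
  if c ≤ 0 then
    ((legRunner t L j).filter fun l => (-c).toNat ≤ l).image fun l => l - (-c).toNat
  else
    ((legRunner t L j).image fun l => l + c.toNat) ∪
      ((Finset.range c.toNat \ armRunner t A j).image fun l => c.toNat - l - 1)

/-- The arm set of the `t`-core of the partition with arm set `A`, leg set `L`. -/
def coreArm (t : ℕ) (A L : Finset ℕ) : Finset ℕ :=
  (Finset.range t).biUnion fun j =>
    (Finset.range (charVec t A L j).toNat).image fun q => q * t + j

/-- The leg set of the `t`-core of the partition with arm set `A`, leg set `L`. -/
def coreLeg (t : ℕ) (A L : Finset ℕ) : Finset ℕ :=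
  (Finset.range t).biUnion fun j =>
    (Finset.range (-(charVec t A L j)).toNat).image fun q => q * t + (t - j - 1)

/-!
Conjugation exchanges the arm and leg sets. Arms of residue `j` and legs of residue `t - 1 - j`
share runner `j`, so runner `j` of `λ*` carries, as arms, the legs of `λ` on its runner
`t - 1 - j`, and as legs the arms there. The characteristic vector and the quotient are built
runner by runner, symmetrically in arms and legs up to the sign of `c`.
-/

lemma legRunner_eq_armRunner (t : ℕ) (X : Finset ℕ) (j : ℕ) :
    legRunner t X j = armRunner t X (t - 1 - j) := by
  rw [legRunner, armRunner, Nat.sub_right_comm]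

lemma armRunner_eq_legRunner (t : ℕ) (X : Finset ℕ) {j : ℕ} (hj : j < t) :
    armRunner t X j = legRunner t X (t - 1 - j) := by
  rw [legRunner_eq_armRunner, Nat.sub_sub_self (by omega : j ≤ t - 1)]

lemma charVec_conj (t : ℕ) (A L : Finset ℕ) {j : ℕ} (hj : j < t) :
    charVec t L A j = -charVec t A L (t - 1 - j) := by
  rw [charVec, charVec, armRunner_eq_legRunner t L hj, legRunner_eq_armRunner t A j]
  ring

lemma quotArm_conj (t : ℕ) (A L : Finset ℕ) {j : ℕ} (hj : j < t) :
    quotArm t L A j = quotLeg t A L (t - 1 - j) := by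
  rw [quotArm, quotLeg, charVec_conj t A L hj, armRunner_eq_legRunner t L hj,
    legRunner_eq_armRunner t A j]
  simp only [neg_neg, neg_nonneg]

lemma quotLeg_conj (t : ℕ) (A L : Finset ℕ) {j : ℕ} (hj : j < t) :
    quotLeg t L A j = quotArm t A L (t - 1 - j) := by
  rw [quotLeg, quotArm, charVec_conj t A L hj, armRunner_eq_legRunner t L hj,
    legRunner_eq_armRunner t A j]
  simp only [neg_neg, neg_nonpos]

theorem conjugate_charVec_and_quotient_general
    (t : ℕ) (A L : Finset ℕ)
    (j : ℕ) (hj : j < t) :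
    charVec t L A j = -(charVec t A L (t - 1 - j))
    ∧ quotArm t L A j = quotLeg t A L (t - 1 - j)
    ∧ quotLeg t L A j = quotArm t A L (t - 1 - j) :=
  ⟨charVec_conj t A L hj, quotArm_conj t A L hj, quotLeg_conj t A L hj⟩

/-- Let `t ≥ 1` and let `λ` be a partition with arm set `A` and leg
set `L` (so its conjugate `λ*` has arm set `L` and leg set `A`). If `λ` has
characteristic vector `(c_0, …, c_{t-1})` and `t`-quotient `(λ^0, …, λ^{t-1})`,
then `λ*` has characteristic vector `(-c_{t-1}, …, -c_0)` and `t`-quotient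
`((λ^{t-1})*, …, (λ^0)*)`. -/
theorem conjugate_charVec_and_quotient
    (t : ℕ) (ht : 0 < t) (A L : Finset ℕ) (hcard : A.card = L.card)
    (j : ℕ) (hj : j < t) :
    charVec t L A j = -(charVec t A L (t - 1 - j))
    ∧ quotArm t L A j = quotLeg t A L (t - 1 - j)
    ∧ quotLeg t L A j = quotArm t A L (t - 1 - j) :=
  conjugate_charVec_and_quotient_general t A L j hj
end

section
/- Let p ≥ 2 and w ≥ 1 be integers. The number of solutions (c_0,…,c_{p−1}) ∈ ℤ^p of the system c_j − c_{j−1} ≤ w−1 for 1 ≤ j ≤ p−1, c_0 − c_{p−1} ≤ w, and c_0 + ⋯ + c_{p−1} = 0, is equal to (1/p)·C(pw, p−1), provided p is prime. -/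
/-!
Index the coordinates by `ZMod p`, so that the constraints read `c (j + 1) - c j ≤ D j` with
`D j = w - 1` except `D (-1) = w`, and `∑ D = N := p (w - 1) + 1`. The slacks
`e j = D j - (c (j + 1) - c j)` form a weak composition of `N` into `p` parts. As
`∑ j * (c (j + 1) - c j) = -∑ c` in `ZMod p`, the condition `∑ c = 0` turns into the
congruence `∑ j * e j = ∑ j * D j` on the moment of `e`, and every composition satisfying it
comes from exactly one `c`. Rotating a composition by `k` changes its moment by `-k N = -k`,
so all `p` moments are equally frequent among the `C(N + p - 1, N) = C(p w, p - 1)`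
compositions.
-/

open Finset

namespace Scopes

variable {p : ℕ}

def toComposition (D c : ZMod p → ℤ) (j : ZMod p) : ℕ := (D j - (c (j + 1) - c j)).toNat

lemma natCast_toComposition {D c : ZMod p → ℤ} (hc : ∀ j, c (j + 1) - c j ≤ D j)
    (j : ZMod p) :
    (toComposition D c j : ℤ) = D j - (c (j + 1) - c j) :=
  Int.toNat_of_nonneg (by linarith [hc j])

variable [NeZero p]

def finEquivZMod (p : ℕ) [NeZero p] : Fin p ≃ ZMod p where
  toFun i := (i : ℕ)
  invFun j := ⟨j.val, j.val_lt⟩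
  left_inv i := Fin.ext (ZMod.val_cast_of_lt i.isLt)
  right_inv := ZMod.natCast_zmod_val

@[simp]
lemma finEquivZMod_apply (i : Fin p) : finEquivZMod p i = (i : ℕ) := rfl

lemma sum_fin_natCast {M : Type*} [AddCommMonoid M] (f : ZMod p → M) :
    ∑ i : Fin p, f (i : ℕ) = ∑ j, f j :=
  (finEquivZMod p).sum_comp f

lemma sum_range_natCast {M : Type*} [AddCommMonoid M] (f : ZMod p → M) :
    ∑ k ∈ range p, f k = ∑ j, f j := by
  rw [← Fin.sum_univ_eq_sum_range, sum_fin_natCast]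

lemma natCast_pred_eq_neg_one : ((p - 1 : ℕ) : ZMod p) = -1 := by
  rw [Nat.cast_sub NeZero.one_le, ZMod.natCast_self, Nat.cast_one, zero_sub]

lemma val_neg_one : (-1 : ZMod p).val = p - 1 := by
  rw [← natCast_pred_eq_neg_one, ZMod.val_cast_of_lt (Nat.sub_lt (NeZero.pos p) one_pos)]

lemma natCast_ne_neg_one {i : ℕ} (hi : i + 1 < p) : (i : ZMod p) ≠ -1 := by
  intro h
  have := congrArg ZMod.val h
  rw [ZMod.val_cast_of_lt (by omega), val_neg_one] at this
  omega

lemma forall_iff_forall_natCast {P : ZMod p → Prop} :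
    (∀ j, P j) ↔ (∀ i : ℕ, i + 1 < p → P i) ∧ P (-1) := by
  refine ⟨fun h => ⟨fun i _ => h i, h (-1)⟩, fun ⟨hlt, hlast⟩ j => ?_⟩
  rw [← ZMod.natCast_zmod_val j]
  by_cases hj : j.val + 1 < p
  · exact hlt _ hj
  · rwa [show j.val = p - 1 by have := j.val_lt; omega, natCast_pred_eq_neg_one]

lemma sum_comp_add {M : Type*} [AddCommMonoid M] (f : ZMod p → M) (k : ZMod p) :
    ∑ j, f (j + k) = ∑ j, f j :=
  Fintype.sum_equiv (Equiv.addRight k) _ _ fun _ => rfl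

lemma sum_mul_sub_comp_add_one (c : ZMod p → ℤ) :
    ∑ j : ZMod p, j * ((c (j + 1) - c j : ℤ) : ZMod p) = -((∑ j, c j : ℤ) : ZMod p) := by
  have shift :
      ∑ j : ZMod p, j * (c (j + 1) : ZMod p) = ∑ j : ZMod p, (j - 1) * (c j : ZMod p) := by
    simpa using sum_comp_add (fun j : ZMod p => (j - 1) * (c j : ZMod p)) 1
  simp only [Int.cast_sub, mul_sub, sum_sub_distrib, shift, sub_mul, one_mul, Int.cast_sum]
  ring

lemma exists_sub_comp_add_one_eq (d : ZMod p → ℤ) (hd : ∑ j, d j = 0) :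
    ∃ c : ZMod p → ℤ, ∀ j, c (j + 1) - c j = d j := by
  refine ⟨fun j => ∑ k ∈ range j.val, d k, forall_iff_forall_natCast.2 ⟨fun i hi => ?_, ?_⟩⟩
  · dsimp only
    rw [← Nat.cast_succ, ZMod.val_cast_of_lt hi, ZMod.val_cast_of_lt (by omega), sum_range_succ]
    ring
  · have hlast : ∑ k ∈ range (p - 1 + 1), d k = 0 := by
      rwa [Nat.sub_add_cancel NeZero.one_le, sum_range_natCast]
    rw [sum_range_succ, natCast_pred_eq_neg_one] at hlast
    simp only [neg_add_cancel, ZMod.val_zero, range_zero, sum_empty, val_neg_one]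
    linarith

lemma eq_of_sub_comp_add_one_eq {c c' : ZMod p → ℤ}
    (h : ∀ j, c (j + 1) - c j = c' (j + 1) - c' j) (hs : ∑ j, c j = ∑ j, c' j) : c = c' := by
  have hperiodic : Function.Periodic (fun j => c j - c' j) 1 := fun j => by linarith [h j]
  have hconst (j : ZMod p) : c j - c' j = c 0 - c' 0 := by
    simpa [ZMod.natCast_zmod_val] using hperiodic.nat_mul_eq j.val
  have h0 : c 0 - c' 0 = 0 := by
    have : ∑ j, (c j - c' j) = p * (c 0 - c' 0) := by
      simp only [hconst, sum_const, card_univ, ZMod.card, nsmul_eq_mul]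
    rw [sum_sub_distrib, hs, sub_self] at this
    exact (mul_eq_zero.1 this.symm).resolve_left (by exact_mod_cast NeZero.ne p)
  funext j
  linarith [hconst j]

def moment (e : ZMod p → ℕ) : ZMod p := ∑ j, j * (e j : ZMod p)

lemma sum_toComposition {D c : ZMod p → ℤ} (hc : ∀ j, c (j + 1) - c j ≤ D j) :
    ∑ j, (toComposition D c j : ℤ) = ∑ j, D j := by
  simp only [natCast_toComposition hc, sum_sub_distrib, sum_comp_add c 1, sub_self, sub_zero]

lemma moment_toComposition {D c : ZMod p → ℤ} (hc : ∀ j, c (j + 1) - c j ≤ D j) :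
    moment (toComposition D c) =
      ∑ j : ZMod p, j * (D j : ZMod p) + ((∑ j, c j : ℤ) : ZMod p) := by
  have hcast (j : ZMod p) :
      (toComposition D c j : ZMod p) = ((D j - (c (j + 1) - c j) : ℤ) : ZMod p) := by
    rw [← natCast_toComposition hc, Int.cast_natCast]
  simp only [moment, hcast, Int.cast_sub (D _), mul_sub, sum_sub_distrib,
    sum_mul_sub_comp_add_one c, sub_neg_eq_add]

lemma eq_of_toComposition_eq {D c c' : ZMod p → ℤ} (hc : ∀ j, c (j + 1) - c j ≤ D j)
    (hc' : ∀ j, c' (j + 1) - c' j ≤ D j) (hs : ∑ j, c j = ∑ j, c' j)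
    (h : toComposition D c = toComposition D c') : c = c' := by
  refine eq_of_sub_comp_add_one_eq (fun j => ?_) hs
  have := congrArg (fun e : ZMod p → ℕ => (e j : ℤ)) h
  simp only [natCast_toComposition hc, natCast_toComposition hc'] at this
  linarith

lemma exists_toComposition_eq {D : ZMod p → ℤ} {N : ℕ} (hD : ∑ j, D j = N) {e : ZMod p → ℕ}
    (he : ∑ j, e j = N) (hm : moment e = ∑ j : ZMod p, j * (D j : ZMod p)) :
    ∃ c : ZMod p → ℤ,
      ((∀ j, c (j + 1) - c j ≤ D j) ∧ ∑ j, c j = 0) ∧ toComposition D c = e := by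
  obtain ⟨c, hc⟩ := exists_sub_comp_add_one_eq (fun j => D j - e j) (by
    rw [sum_sub_distrib, hD, ← Nat.cast_sum, he, sub_self])
  have hbound (j : ZMod p) : c (j + 1) - c j ≤ D j := by simp [hc]
  have hinv : toComposition D c = e := by funext j; simp [toComposition, hc]
  -- the moment condition is exactly what lets the additive constant normalise the sum to zero
  obtain ⟨t, ht⟩ : (p : ℤ) ∣ ∑ j, c j := by
    rw [← ZMod.intCast_zmod_eq_zero_iff_dvd]
    have := moment_toComposition hbound
    rwa [hinv, hm, left_eq_add] at this
  refine ⟨fun j => c j - t, ⟨fun j => by simpa using hbound j, ?_⟩, ?_⟩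
  · simp [sum_sub_distrib, ht]
  · rw [← hinv]
    funext j
    simp only [toComposition, sub_sub_sub_cancel_right]

noncomputable def boundedSolutionsEquiv (D : ZMod p → ℤ) (N : ℕ) (hD : ∑ j, D j = N) :
    {c : ZMod p → ℤ // (∀ j, c (j + 1) - c j ≤ D j) ∧ ∑ j, c j = 0} ≃
      {e : ZMod p → ℕ // ∑ j, e j = N ∧ moment e = ∑ j : ZMod p, j * (D j : ZMod p)} :=
  Equiv.ofBijective
    (fun c => ⟨toComposition D c.1, by exact_mod_cast (sum_toComposition c.2.1).trans hD,
      by rw [moment_toComposition c.2.1, c.2.2, Int.cast_zero, add_zero]⟩)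
    ⟨fun c c' h => Subtype.ext <| eq_of_toComposition_eq c.2.1 c'.2.1 (c.2.2.trans c'.2.2.symm)
        (congrArg Subtype.val h),
      fun e => by
        obtain ⟨c, hc, hce⟩ := exists_toComposition_eq hD e.2.1 e.2.2
        exact ⟨⟨c, hc⟩, Subtype.ext hce⟩⟩

lemma moment_comp_add (e : ZMod p → ℕ) (k : ZMod p) :
    moment (fun j => e (j + k)) = moment e - k * ((∑ j, e j : ℕ) : ZMod p) := by
  have : moment (fun j => e (j + k)) = ∑ j : ZMod p, (j - k) * (e j : ZMod p) :=
    Fintype.sum_equiv (Equiv.addRight k) _ _ fun j => by simp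
  rw [this, moment, Nat.cast_sum, mul_sum, ← sum_sub_distrib]
  exact sum_congr rfl fun j _ => by ring

def compositionsEquivProd (N : ℕ) (hN : N.Coprime p) (r : ZMod p) :
    {e : ZMod p → ℕ // ∑ j, e j = N} ≃
      {e : ZMod p → ℕ // ∑ j, e j = N ∧ moment e = r} × ZMod p where
  toFun e :=
    (⟨fun j => e.1 (j + (moment e.1 - r) * (N : ZMod p)⁻¹), by rw [sum_comp_add, e.2], by
      rw [moment_comp_add, e.2, mul_assoc, mul_comm _ (N : ZMod p), ZMod.coe_mul_inv_eq_one N hN,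
        mul_one, sub_sub_cancel]⟩, (moment e.1 - r) * (N : ZMod p)⁻¹)
  invFun a := ⟨fun j => a.1.1 (j - a.2), by simp_rw [sub_eq_add_neg, sum_comp_add, a.1.2.1]⟩
  left_inv e := by ext j; simp
  right_inv := by
    rintro ⟨⟨e, he, hm⟩, k⟩
    have hk : (moment (fun j => e (j - k)) - r) * (N : ZMod p)⁻¹ = k := by
      simp_rw [sub_eq_add_neg, moment_comp_add, he, hm]
      rw [show r - -k * N + -r = k * N by ring, mul_assoc, ZMod.coe_mul_inv_eq_one N hN, mul_one]
    ext j
    · simp [hk]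
    · exact hk

lemma card_sum_eq_choose (α : Type*) [Fintype α] [DecidableEq α] (N : ℕ) :
    Nat.card {e : α → ℕ // ∑ i, e i = N} = (Fintype.card α + N - 1).choose N := by
  rw [← Nat.card_congr (Sym.equivNatSumOfFintype α N), Nat.card_eq_fintype_card,
    Sym.card_sym_eq_choose]

theorem mul_card_boundedSolutions (D : ZMod p → ℤ) (N : ℕ) (hD : ∑ j, D j = N)
    (hN : N.Coprime p) :
    p * Nat.card {c : ZMod p → ℤ // (∀ j, c (j + 1) - c j ≤ D j) ∧ ∑ j, c j = 0}
      = (p + N - 1).choose N := by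
  have hcomp := card_sum_eq_choose (ZMod p) N
  rw [ZMod.card, Nat.card_congr (compositionsEquivProd N hN (∑ j : ZMod p, j * (D j : ZMod p))),
    Nat.card_prod, Nat.card_zmod] at hcomp
  rw [Nat.card_congr (boundedSolutionsEquiv D N hD), mul_comm, hcomp]

def scopesBound (w : ℕ) (j : ZMod p) : ℤ := if j = -1 then w else w - 1

lemma sum_scopesBound {w : ℕ} (hw : 1 ≤ w) :
    ∑ j : ZMod p, scopesBound w j = (p * (w - 1) + 1 : ℕ) := by
  have hsplit (j : ZMod p) : scopesBound w j = (w - 1 : ℕ) + if j = -1 then 1 else 0 := by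
    unfold scopesBound; split_ifs <;> omega
  simp [hsplit, sum_add_distrib]

def scopesSolutionsEquivFin (w : ℕ) :
    {c : ZMod p → ℤ // (∀ j, c (j + 1) - c j ≤ scopesBound w j) ∧ ∑ j, c j = 0} ≃
      {c : Fin p → ℤ //
        (∀ (i : ℕ) (hi : i + 1 < p), c ⟨i + 1, hi⟩ - c ⟨i, Nat.lt_of_succ_lt hi⟩ ≤ (w : ℤ) - 1)
        ∧ c ⟨0, NeZero.pos p⟩ - c ⟨p - 1, Nat.sub_lt (NeZero.pos p) Nat.one_pos⟩ ≤ (w : ℤ)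
        ∧ ∑ i, c i = 0} :=
  Equiv.subtypeEquiv ((finEquivZMod p).symm.arrowCongr (Equiv.refl ℤ)) fun c => by
    rw [forall_iff_forall_natCast]
    simp only [Equiv.arrowCongr_apply, Equiv.symm_symm, Equiv.refl_apply, Function.comp_def,
      finEquivZMod_apply, scopesBound, natCast_pred_eq_neg_one, Nat.cast_succ, Nat.cast_zero,
      neg_add_cancel, if_true, and_assoc, sum_fin_natCast]
    exact and_congr (forall₂_congr fun i hi => by rw [if_neg (natCast_ne_neg_one hi)]) Iff.rfl

end Scopes

/-- Let `p` be prime and `w ≥ 1`. The number of vectors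
`(c_0, …, c_{p-1}) ∈ ℤ^p` with `c_j - c_{j-1} ≤ w - 1` for `1 ≤ j ≤ p-1`,
`c_0 - c_{p-1} ≤ w`, and `c_0 + ⋯ + c_{p-1} = 0` equals
`(1/p) * C(p*w, p-1)`. -/
theorem number_of_scopes_families (p w : ℕ) (hp : p.Prime) (hw : 1 ≤ w) :
    p * Nat.card {c : Fin p → ℤ //
        (∀ (i : ℕ) (hi : i + 1 < p),
            c ⟨i + 1, hi⟩ - c ⟨i, Nat.lt_of_succ_lt hi⟩ ≤ (w : ℤ) - 1)
        ∧ c ⟨0, hp.pos⟩ - c ⟨p - 1, Nat.sub_lt hp.pos Nat.one_pos⟩ ≤ (w : ℤ)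
        ∧ ∑ i, c i = 0}
      = (p * w).choose (p - 1) := by
  have : NeZero p := ⟨hp.ne_zero⟩
  rw [← Nat.card_congr (Scopes.scopesSolutionsEquivFin w),
    Scopes.mul_card_boundedSolutions _ _ (Scopes.sum_scopesBound hw)
      ((Nat.coprime_mul_left_add_left 1 p (w - 1)).2 (Nat.coprime_one_left p))]
  obtain ⟨v, rfl⟩ : ∃ v, w = v + 1 := ⟨w - 1, by omega⟩
  have := hp.one_le
  rw [Nat.add_sub_cancel, Nat.mul_succ, show p + (p * v + 1) - 1 = p * v + p by omega]
  exact Nat.choose_symm_of_eq_add (by omega)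
end

section
/- Let p be a prime and w ≥ 1. The number of vectors (c_0,…,c_{p−1}) ∈ ℤ^p satisfying c_{j−1} − c_j ≤ w−1 for 1 ≤ j ≤ p−1, c_{p−1} − c_0 ≤ w−2, and Σ c_j = 0, equals (1/p)·C(pw−2, p−1). -/
open Finset
open Fin.NatCast

section Scopes

variable (p w : ℕ) [NeZero p]

private def rotOne (d : Fin p → ℕ) : Fin p → ℕ := fun i => d (i + 1)

private def Fd (d : Fin p → ℕ) (j : ℕ) : ℤ :=
  ∑ i ∈ Finset.range j, ((d ((i + 1 : ℕ) : Fin p) : ℤ) - ((w : ℤ) - 1))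

private def Gd (d : Fin p → ℕ) : ℤ := ∑ j ∈ Finset.range p, Fd p w d j

private def gd (d : Fin p → ℕ) : ZMod p := (Gd p w d : ZMod p)

private lemma rot_sum (d : Fin p → ℕ) : ∑ i, rotOne p d i = ∑ i, d i :=
  Equiv.sum_comp (Equiv.addRight (1 : Fin p)) d

private lemma rot_iter_apply (m : ℕ) (d : Fin p → ℕ) (i : Fin p) :
    (rotOne p)^[m] d i = d (i + (m : Fin p)) := by
  induction m generalizing i with
  | zero => simp
  | succ m ih =>
    rw [Function.iterate_succ_apply']
    show (rotOne p)^[m] d (i + 1) = _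
    rw [ih]
    congr 1
    push_cast
    abel

private lemma rot_iter_sum (m : ℕ) (d : Fin p → ℕ) :
    ∑ i, (rotOne p)^[m] d i = ∑ i, d i := by
  induction m with
  | zero => simp
  | succ m ih => rw [Function.iterate_succ_apply', rot_sum, ih]

private lemma rot_injective : Function.Injective (rotOne p) := by
  intro d d' h
  funext i
  have := congrFun h (i - 1)
  simpa [rotOne, sub_add_cancel] using this

private lemma fd_zero (d : Fin p → ℕ) : Fd p w d 0 = 0 := by simp [Fd]

private lemma fd_succ (d : Fin p → ℕ) (j : ℕ) :
    Fd p w d (j + 1) = Fd p w d j + ((d ((j + 1 : ℕ) : Fin p) : ℤ) - ((w : ℤ) - 1)) :=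
  Finset.sum_range_succ _ _

private lemma fd_top (d : Fin p → ℕ) :
    Fd p w d p = (∑ i, (d i : ℤ)) - p * ((w : ℤ) - 1) := by
  have h1 : Fd p w d p
      = (∑ i ∈ Finset.range p, (d ((i + 1 : ℕ) : Fin p) : ℤ)) - p * ((w : ℤ) - 1) := by
    rw [Fd, Finset.sum_sub_distrib, Finset.sum_const, Finset.card_range]
    ring
  rw [h1]
  have h2 : ∑ i ∈ Finset.range p, (d ((i + 1 : ℕ) : Fin p) : ℤ)
      = ∑ i : Fin p, (d (i + 1) : ℤ) := by
    rw [← Fin.sum_univ_eq_sum_range (fun i => (d ((i + 1 : ℕ) : Fin p) : ℤ)) p]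
    refine Finset.sum_congr rfl fun i _ => ?_
    congr 1
    push_cast
    simp
  rw [h2]
  congr 1
  exact Equiv.sum_comp (Equiv.addRight (1 : Fin p)) (fun j => (d j : ℤ))

private lemma fd_top_val (d : Fin p → ℕ) (hw2 : 2 ≤ w)
    (hs : ∑ i, d i = p * w - p - 1) :
    Fd p w d p = -1 := by
  have hppos : 0 < p := NeZero.pos p
  rw [fd_top]
  have : (∑ i, (d i : ℤ)) = ((p * w - p - 1 : ℕ) : ℤ) := by
    rw [← hs]; push_cast; ring
  rw [this]
  have hcast : ((p * w - p - 1 : ℕ) : ℤ) = (p : ℤ) * w - p - 1 := by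
    have : p + 1 ≤ p * w := by nlinarith
    omega
  rw [hcast]; ring

private lemma gd_rot (d : Fin p → ℕ) (hw2 : 2 ≤ w)
    (hs : ∑ i, d i = p * w - p - 1) :
    gd p w (rotOne p d) = gd p w d - 1 := by
  have hFp : Fd p w d p = -1 := fd_top_val p w d hw2 hs
  have hfd_rot : ∀ j, Fd p w (rotOne p d) j = Fd p w d (j + 1) - Fd p w d 1 := by
    intro j
    have e1 : Fd p w d (j + 1)
        = (∑ i ∈ Finset.range j, ((d ((i + 1 + 1 : ℕ) : Fin p) : ℤ) - ((w : ℤ) - 1)))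
          + Fd p w d 1 := by
      rw [Fd, Finset.sum_range_succ']
      congr 1
      simp [Fd]
    rw [e1]
    have e2 : Fd p w (rotOne p d) j
        = ∑ i ∈ Finset.range j, ((d ((i + 1 + 1 : ℕ) : Fin p) : ℤ) - ((w : ℤ) - 1)) := by
      rw [Fd]
      refine Finset.sum_congr rfl fun i _ => ?_
      congr 2
      show d (((i + 1 : ℕ) : Fin p) + 1) = d ((i + 1 + 1 : ℕ) : Fin p)
      congr 1
      push_cast
      ring
    rw [e2]; ring
  have hG : Gd p w (rotOne p d) = Gd p w d + Fd p w d p - p * Fd p w d 1 := by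
    have e3 : Gd p w (rotOne p d)
        = (∑ j ∈ Finset.range p, Fd p w d (j + 1)) - p * Fd p w d 1 := by
      rw [Gd]
      rw [Finset.sum_congr rfl fun j _ => hfd_rot j]
      rw [Finset.sum_sub_distrib, Finset.sum_const, Finset.card_range]
      ring
    have e4 : ∑ j ∈ Finset.range p, Fd p w d (j + 1) = Gd p w d + Fd p w d p := by
      have := Finset.sum_range_succ (Fd p w d) p
      have h5 := Finset.sum_range_succ' (Fd p w d) p
      rw [this] at h5
      rw [fd_zero] at h5
      unfold Gd
      omega
    rw [e3, e4]
  unfold gd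
  rw [hG, hFp]
  push_cast
  simp
  ring

private lemma gd_rot_iter (d : Fin p → ℕ) (hw2 : 2 ≤ w)
    (hs : ∑ i, d i = p * w - p - 1) (m : ℕ) :
    gd p w ((rotOne p)^[m] d) = gd p w d - m := by
  induction m with
  | zero => simp
  | succ m ih =>
    rw [Function.iterate_succ_apply', gd_rot p w _ hw2 (by rw [rot_iter_sum]; exact hs), ih]
    push_cast
    ring

private def dvec (c : Fin p → ℤ) : Fin p → ℕ := fun i =>
  if (i : ℕ) = 0 then
    ((w : ℤ) - 2 - (c ⟨p - 1, Nat.sub_lt (NeZero.pos p) Nat.one_pos⟩ - c ⟨0, NeZero.pos p⟩)).toNat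
  else
    ((w : ℤ) - 1 - (c ⟨(i : ℕ) - 1, Nat.lt_of_le_of_lt (Nat.sub_le _ _) i.isLt⟩ - c i)).toNat

private lemma dvec_succ (c : Fin p → ℤ) (i : ℕ) (hi : i + 1 < p)
    (h : c ⟨i, Nat.lt_of_succ_lt hi⟩ - c ⟨i + 1, hi⟩ ≤ (w : ℤ) - 1) :
    (dvec p w c ⟨i + 1, hi⟩ : ℤ)
      = ((w : ℤ) - 1) - (c ⟨i, Nat.lt_of_succ_lt hi⟩ - c ⟨i + 1, hi⟩) := by
  unfold dvec
  rw [if_neg (by simp)]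
  simp only [Nat.add_sub_cancel]
  rw [Int.toNat_of_nonneg (by omega)]

private lemma dvec_zeroth (c : Fin p → ℤ)
    (h : c ⟨p - 1, Nat.sub_lt (NeZero.pos p) Nat.one_pos⟩ - c ⟨0, NeZero.pos p⟩ ≤ (w : ℤ) - 2) :
    (dvec p w c ⟨0, NeZero.pos p⟩ : ℤ)
      = ((w : ℤ) - 2) - (c ⟨p - 1, Nat.sub_lt (NeZero.pos p) Nat.one_pos⟩
          - c ⟨0, NeZero.pos p⟩) := by
  unfold dvec
  rw [if_pos rfl]
  rw [Int.toNat_of_nonneg (by omega)]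

private lemma c_repr (c : Fin p → ℤ)
    (hc1 : ∀ (i : ℕ) (hi : i + 1 < p),
      c ⟨i, Nat.lt_of_succ_lt hi⟩ - c ⟨i + 1, hi⟩ ≤ (w : ℤ) - 1) :
    ∀ (m : ℕ) (hm : m < p),
      c ⟨m, hm⟩ = c ⟨0, NeZero.pos p⟩ + Fd p w (dvec p w c) m := by
  intro m
  induction m with
  | zero => intro hm; rw [fd_zero]; ring
  | succ m ih =>
    intro hm
    rw [fd_succ]
    have hcast : ((m + 1 : ℕ) : Fin p) = ⟨m + 1, hm⟩ := by
      apply Fin.ext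
      rw [Fin.val_natCast]
      exact Nat.mod_eq_of_lt hm
    rw [hcast, dvec_succ p w c m hm (hc1 m hm), ih (Nat.lt_of_succ_lt hm)]
    ring

private lemma dvec_sum (c : Fin p → ℤ) (hw2 : 2 ≤ w)
    (hc1 : ∀ (i : ℕ) (hi : i + 1 < p),
      c ⟨i, Nat.lt_of_succ_lt hi⟩ - c ⟨i + 1, hi⟩ ≤ (w : ℤ) - 1)
    (hc2 : c ⟨p - 1, Nat.sub_lt (NeZero.pos p) Nat.one_pos⟩ - c ⟨0, NeZero.pos p⟩
      ≤ (w : ℤ) - 2) :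
    ∑ i, dvec p w c i = p * w - p - 1 := by
  have hppos : 0 < p := NeZero.pos p
  set g : ℕ → ℤ := fun m => c ((m : ℕ) : Fin p) with hgdef
  have hz : ((0 : ℕ) : Fin p) = ⟨0, hppos⟩ := by apply Fin.ext; simp
  have hlast : ((p - 1 : ℕ) : Fin p) = ⟨p - 1, Nat.sub_lt hppos Nat.one_pos⟩ := by
    apply Fin.ext; rw [Fin.val_natCast]
    exact Nat.mod_eq_of_lt (Nat.sub_lt hppos Nat.one_pos)
  have key : ∀ i, i + 1 < p → (dvec p w c ((i + 1 : ℕ) : Fin p) : ℤ)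
      = ((w : ℤ) - 1) + (g (i + 1) - g i) := by
    intro i hilt
    have h1 : ((i + 1 : ℕ) : Fin p) = ⟨i + 1, hilt⟩ := by
      apply Fin.ext; rw [Fin.val_natCast]; exact Nat.mod_eq_of_lt hilt
    have h2 : ((i : ℕ) : Fin p) = ⟨i, Nat.lt_of_succ_lt hilt⟩ := by
      apply Fin.ext; rw [Fin.val_natCast]; exact Nat.mod_eq_of_lt (Nat.lt_of_succ_lt hilt)
    rw [h1, dvec_succ p w c i hilt (hc1 i hilt), hgdef]
    simp only [h1, h2]
    ring
  have keyA : ∑ i ∈ Finset.range (p - 1), (dvec p w c ((i + 1 : ℕ) : Fin p) : ℤ)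
      = ((p - 1 : ℕ) : ℤ) * ((w : ℤ) - 1) + (g (p - 1) - g 0) := by
    have hcg : ∀ i ∈ Finset.range (p - 1), (dvec p w c ((i + 1 : ℕ) : Fin p) : ℤ)
        = ((w : ℤ) - 1) + (g (i + 1) - g i) := fun i hi =>
      key i (by have := Finset.mem_range.mp hi; omega)
    rw [Finset.sum_congr rfl hcg, Finset.sum_add_distrib, Finset.sum_const,
      Finset.card_range, Finset.sum_range_sub g (p - 1), nsmul_eq_mul]
  have key2 : (∑ i, (dvec p w c i : ℤ)) = ((p * w - p - 1 : ℕ) : ℤ) := by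
    have e0 : (∑ i, (dvec p w c i : ℤ))
        = ∑ m ∈ Finset.range p, (dvec p w c ((m : ℕ) : Fin p) : ℤ) := by
      rw [← Fin.sum_univ_eq_sum_range (fun m => (dvec p w c ((m : ℕ) : Fin p) : ℤ)) p]
      refine Finset.sum_congr rfl fun i _ => ?_
      rw [Fin.cast_val_eq_self i]
    rw [e0]
    have hrange : Finset.range p = Finset.range ((p - 1) + 1) := by
      congr 1; omega
    rw [hrange, Finset.sum_range_succ', keyA, hz]
    rw [dvec_zeroth p w c hc2]
    have hgl : c ⟨p - 1, Nat.sub_lt (NeZero.pos p) Nat.one_pos⟩ = g (p - 1) := by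
      rw [hgdef]; simp only; rw [hlast]
    have hg0 : c ⟨0, NeZero.pos p⟩ = g 0 := by
      rw [hgdef]; simp only; rw [hz]
    rw [hgl, hg0]
    have hc3 : ((p * w - p - 1 : ℕ) : ℤ) = (p : ℤ) * w - p - 1 := by
      have : p + 1 ≤ p * w := by nlinarith
      omega
    have hc4 : ((p - 1 : ℕ) : ℤ) = (p : ℤ) - 1 := by omega
    rw [hc3, hc4]; ring
  exact_mod_cast key2

private lemma gd_dvec (c : Fin p → ℤ)
    (hc1 : ∀ (i : ℕ) (hi : i + 1 < p),
      c ⟨i, Nat.lt_of_succ_lt hi⟩ - c ⟨i + 1, hi⟩ ≤ (w : ℤ) - 1)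
    (hc3 : ∑ i, c i = 0) :
    Gd p w (dvec p w c) = -(p * c ⟨0, NeZero.pos p⟩) := by
  unfold Gd
  have e1 : ∀ j ∈ Finset.range p,
      Fd p w (dvec p w c) j = c ((j : ℕ) : Fin p) - c ⟨0, NeZero.pos p⟩ := by
    intro j hj
    have hjlt : j < p := Finset.mem_range.mp hj
    have : ((j : ℕ) : Fin p) = ⟨j, hjlt⟩ := by
      apply Fin.ext; simp [Fin.val_natCast, Nat.mod_eq_of_lt hjlt]
    rw [this, c_repr p w c hc1 j hjlt]
    ring
  rw [Finset.sum_congr rfl e1, Finset.sum_sub_distrib, Finset.sum_const, Finset.card_range]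
  rw [← Fin.sum_univ_eq_sum_range (fun j => c ((j : ℕ) : Fin p)) p]
  have : ∀ i : Fin p, c (((i : ℕ) : ℕ) : Fin p) = c i := by
    intro i; congr 1; exact Fin.cast_val_eq_self i
  rw [Finset.sum_congr rfl fun i _ => this i, hc3]
  simp [nsmul_eq_mul]

private lemma gd_dvec_zero (c : Fin p → ℤ)
    (hc1 : ∀ (i : ℕ) (hi : i + 1 < p),
      c ⟨i, Nat.lt_of_succ_lt hi⟩ - c ⟨i + 1, hi⟩ ≤ (w : ℤ) - 1)
    (hc3 : ∑ i, c i = 0) :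
    gd p w (dvec p w c) = 0 := by
  unfold gd
  rw [gd_dvec p w c hc1 hc3]
  push_cast
  simp

private lemma exists_c (d : Fin p → ℕ) (hw2 : 2 ≤ w)
    (hs : ∑ i, d i = p * w - p - 1) (hg : gd p w d = 0) :
    ∃ c : Fin p → ℤ,
      ((∀ (i : ℕ) (hi : i + 1 < p),
          c ⟨i, Nat.lt_of_succ_lt hi⟩ - c ⟨i + 1, hi⟩ ≤ (w : ℤ) - 1)
        ∧ c ⟨p - 1, Nat.sub_lt (NeZero.pos p) Nat.one_pos⟩ - c ⟨0, NeZero.pos p⟩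
            ≤ (w : ℤ) - 2
        ∧ ∑ i, c i = 0)
      ∧ dvec p w c = d := by
  have hppos : 0 < p := NeZero.pos p
  obtain ⟨u, hu⟩ : (p : ℤ) ∣ Gd p w d := by
    have := (ZMod.intCast_zmod_eq_zero_iff_dvd (Gd p w d) p).mp hg
    exact_mod_cast this
  refine ⟨fun j => -u + Fd p w d (j : ℕ), ⟨?_, ?_, ?_⟩, ?_⟩
  case _ =>
    intro i hi
    simp only
    have : Fd p w d (i + 1) = Fd p w d i + ((d ((i + 1 : ℕ) : Fin p) : ℤ) - ((w : ℤ) - 1)) :=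
      fd_succ p w d i
    have hd0 : (0 : ℤ) ≤ (d ((i + 1 : ℕ) : Fin p) : ℤ) := Int.natCast_nonneg _
    omega
  case _ =>
    simp only
    have hwrap : Fd p w d (p - 1) = (w : ℤ) - 2 - (d ⟨0, hppos⟩ : ℤ) := by
      have htop : Fd p w d p = -1 := fd_top_val p w d hw2 hs
      have hsucc : Fd p w d ((p - 1) + 1)
          = Fd p w d (p - 1) + ((d (((p - 1) + 1 : ℕ) : Fin p) : ℤ) - ((w : ℤ) - 1)) :=
        fd_succ p w d (p - 1)
      have hp1 : (p - 1) + 1 = p := by omega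
      rw [hp1] at hsucc
      have hz : ((p : ℕ) : Fin p) = ⟨0, hppos⟩ := by
        apply Fin.ext; simp [Fin.val_natCast]
      rw [hz] at hsucc
      rw [htop] at hsucc
      omega
    rw [hwrap]
    have : (0 : ℤ) ≤ (d ⟨0, hppos⟩ : ℤ) := Int.natCast_nonneg _
    have hF0 : Fd p w d 0 = 0 := fd_zero p w d
    omega
  case _ =>
    simp only
    rw [Finset.sum_add_distrib, Finset.sum_const, Finset.card_univ, Fintype.card_fin]
    rw [Fin.sum_univ_eq_sum_range (Fd p w d) p]
    show (p : ℤ) • (-u) + Gd p w d = 0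
    rw [hu]
    simp [mul_comm]
  case _ =>
    funext i
    by_cases h0 : (i : ℕ) = 0
    · have hieq : i = ⟨0, hppos⟩ := by apply Fin.ext; simpa using h0
      subst hieq
      unfold dvec
      rw [if_pos rfl]
      simp only
      have hwrap : Fd p w d (p - 1) = (w : ℤ) - 2 - (d ⟨0, hppos⟩ : ℤ) := by
        have htop : Fd p w d p = -1 := fd_top_val p w d hw2 hs
        have hsucc : Fd p w d ((p - 1) + 1)
            = Fd p w d (p - 1) + ((d (((p - 1) + 1 : ℕ) : Fin p) : ℤ) - ((w : ℤ) - 1)) :=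
          fd_succ p w d (p - 1)
        have hp1 : (p - 1) + 1 = p := by omega
        rw [hp1] at hsucc
        have hz : ((p : ℕ) : Fin p) = ⟨0, hppos⟩ := by
          apply Fin.ext; simp [Fin.val_natCast]
        rw [hz] at hsucc
        rw [htop] at hsucc
        omega
      rw [fd_zero, hwrap]
      have : ((w : ℤ) - 2 - ((-u + ((w : ℤ) - 2 - (d ⟨0, hppos⟩ : ℤ))) - (-u + 0)))
          = (d ⟨0, hppos⟩ : ℤ) := by ring
      rw [this, Int.toNat_natCast]
    · obtain ⟨m, hm⟩ : ∃ m, (i : ℕ) = m + 1 := ⟨(i : ℕ) - 1, by omega⟩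
      unfold dvec
      rw [if_neg h0]
      simp only
      have hmlt : m + 1 < p := hm ▸ i.isLt
      have hsucc : Fd p w d (m + 1)
          = Fd p w d m + ((d ((m + 1 : ℕ) : Fin p) : ℤ) - ((w : ℤ) - 1)) :=
        fd_succ p w d m
      have hmi : ((m + 1 : ℕ) : Fin p) = i := by
        apply Fin.ext; rw [Fin.val_natCast, Nat.mod_eq_of_lt hmlt]; omega
      rw [hmi] at hsucc
      have hiv : ((i : ℕ) - 1 : ℕ) = m := by omega
      rw [hiv, hm, hsucc]
      have : ((w : ℤ) - 1 - ((-u + Fd p w d m) - (-u + (Fd p w d m + ((d i : ℤ) - ((w : ℤ) - 1))))))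
          = (d i : ℤ) := by ring
      rw [this, Int.toNat_natCast]

private lemma card_comp (p n : ℕ) (hp : 0 < p) :
    Nat.card {d : Fin p → ℕ // ∑ i, d i = n} = (n + p - 1).choose (p - 1) := by
  have e : {d : Fin p → ℕ // ∑ i, d i = n} ≃ Sym (Fin p) n := {
    toFun := fun d => ⟨∑ i : Fin p, Multiset.replicate (d.1 i) i, by
      simp [d.2]⟩
    invFun := fun m => ⟨fun i => m.1.count i, by
      rw [Multiset.sum_count_eq_card (by simp)]; exact m.2⟩
    left_inv := fun d => by
      ext j
      simp [Multiset.count_sum', Multiset.count_replicate]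
    right_inv := fun m => by
      ext : 1
      simp only
      have h2 : ∀ i : Fin p, Multiset.replicate (m.1.count i) i = m.1.count i • {i} := by
        intro i; rw [Multiset.nsmul_singleton]
      calc ∑ i : Fin p, Multiset.replicate (m.1.count i) i
          = ∑ i : Fin p, m.1.count i • ({i} : Multiset (Fin p)) :=
            Finset.sum_congr rfl fun i _ => h2 i
        _ = ∑ i ∈ m.1.toFinset, m.1.count i • ({i} : Multiset (Fin p)) := by
            refine (Finset.sum_subset (Finset.subset_univ _) ?_).symm
            intro x _ hx
            rw [Multiset.count_eq_zero_of_notMem (by simpa using hx), zero_smul]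
        _ = m.1 := Multiset.toFinset_sum_count_nsmul_eq m.1 }
  rw [Nat.card_congr e, Nat.card_eq_fintype_card, Sym.card_sym_eq_choose, Fintype.card_fin]
  rw [← Nat.choose_symm (by omega : n ≤ p + n - 1)]
  congr 1 <;> omega

/-- Let `p` be prime and `w ≥ 1`. The number of vectors
`(c_0, …, c_{p-1}) ∈ ℤ^p` with `c_{j-1} - c_j ≤ w - 1` for `1 ≤ j ≤ p-1`,
`c_{p-1} - c_0 ≤ w - 2`, and `∑ c_j = 0` equals `(1/p) * C(p*w - 2, p-1)`. -/
theorem number_of_finite_scopes_families (p w : ℕ) (hp : p.Prime) (hw : 1 ≤ w) :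
    p * Nat.card {c : Fin p → ℤ //
        (∀ (i : ℕ) (hi : i + 1 < p),
            c ⟨i, Nat.lt_of_succ_lt hi⟩ - c ⟨i + 1, hi⟩ ≤ (w : ℤ) - 1)
        ∧ c ⟨p - 1, Nat.sub_lt hp.pos Nat.one_pos⟩ - c ⟨0, hp.pos⟩ ≤ (w : ℤ) - 2
        ∧ ∑ i, c i = 0}
      = (p * w - 2).choose (p - 1) := by
  haveI : NeZero p := ⟨hp.pos.ne'⟩
  have hp2 : 2 ≤ p := hp.two_le
  rcases eq_or_lt_of_le hw with hw1 | hw2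
  · -- case w = 1 : the set is empty and the binomial coefficient is zero
    have hw1 : w = 1 := hw1.symm
    subst hw1
    have hempty : IsEmpty {c : Fin p → ℤ //
        (∀ (i : ℕ) (hi : i + 1 < p),
            c ⟨i, Nat.lt_of_succ_lt hi⟩ - c ⟨i + 1, hi⟩ ≤ ((1 : ℕ) : ℤ) - 1)
        ∧ c ⟨p - 1, Nat.sub_lt hp.pos Nat.one_pos⟩ - c ⟨0, hp.pos⟩ ≤ ((1 : ℕ) : ℤ) - 2
        ∧ ∑ i, c i = 0} := by
      constructor
      rintro ⟨c, hc1, hc2, hc3⟩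
      have mono : ∀ (m : ℕ) (hm : m < p), c ⟨0, hp.pos⟩ ≤ c ⟨m, hm⟩ := by
        intro m
        induction m with
        | zero => intro hm; exact le_refl _
        | succ m ih =>
          intro hm
          have h1 := hc1 m hm
          have h2 := ih (Nat.lt_of_succ_lt hm)
          push_cast at h1
          omega
      have := mono (p - 1) (Nat.sub_lt hp.pos Nat.one_pos)
      push_cast at hc2
      omega
    rw [Nat.card_of_isEmpty, Nat.mul_zero]
    exact (Nat.choose_eq_zero_of_lt (by omega)).symm
  · have hw2 : 2 ≤ w := hw2
    have hn2 : p + 2 ≤ p * w := by nlinarith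
    let Φ : Fin p × {c : Fin p → ℤ //
        (∀ (i : ℕ) (hi : i + 1 < p),
            c ⟨i, Nat.lt_of_succ_lt hi⟩ - c ⟨i + 1, hi⟩ ≤ (w : ℤ) - 1)
        ∧ c ⟨p - 1, Nat.sub_lt hp.pos Nat.one_pos⟩ - c ⟨0, hp.pos⟩ ≤ (w : ℤ) - 2
        ∧ ∑ i, c i = 0}
        → {d : Fin p → ℕ // ∑ i, d i = p * w - p - 1} := fun x =>
      ⟨(rotOne p)^[(x.1 : ℕ)] (dvec p w x.2.1), by
        rw [rot_iter_sum]
        exact dvec_sum p w x.2.1 hw2 x.2.2.1 x.2.2.2.1⟩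
    have hbij : Function.Bijective Φ := by
      constructor
      · rintro ⟨k, c⟩ ⟨k', c'⟩ hab
        have hv : (rotOne p)^[(k : ℕ)] (dvec p w c.1)
            = (rotOne p)^[(k' : ℕ)] (dvec p w c'.1) := congrArg Subtype.val hab
        have hsc : ∑ i, dvec p w c.1 i = p * w - p - 1 :=
          dvec_sum p w c.1 hw2 c.2.1 c.2.2.1
        have hsc' : ∑ i, dvec p w c'.1 i = p * w - p - 1 :=
          dvec_sum p w c'.1 hw2 c'.2.1 c'.2.2.1
        have h1 : gd p w ((rotOne p)^[(k : ℕ)] (dvec p w c.1)) = 0 - ((k : ℕ) : ZMod p) := by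
          rw [gd_rot_iter p w _ hw2 hsc, gd_dvec_zero p w c.1 c.2.1 c.2.2.2]
        have h2 : gd p w ((rotOne p)^[(k' : ℕ)] (dvec p w c'.1)) = 0 - ((k' : ℕ) : ZMod p) := by
          rw [gd_rot_iter p w _ hw2 hsc', gd_dvec_zero p w c'.1 c'.2.1 c'.2.2.2]
        rw [hv, h2] at h1
        have hkk : ((k : ℕ) : ZMod p) = ((k' : ℕ) : ZMod p) := by
          have h4 : -((k' : ℕ) : ZMod p) = -((k : ℕ) : ZMod p) := by
            simpa using h1
          simpa using h4.symm
        have hkeq : k = k' := by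
          apply Fin.ext
          have h3 := congrArg ZMod.val hkk
          rwa [ZMod.val_natCast_of_lt k.isLt, ZMod.val_natCast_of_lt k'.isLt] at h3
        subst hkeq
        have hdv : dvec p w c.1 = dvec p w c'.1 :=
          (rot_injective p).iterate (k : ℕ) hv
        have hc0 : c.1 ⟨0, NeZero.pos p⟩ = c'.1 ⟨0, NeZero.pos p⟩ := by
          have e1 := gd_dvec p w c.1 c.2.1 c.2.2.2
          have e2 := gd_dvec p w c'.1 c'.2.1 c'.2.2.2
          rw [hdv] at e1
          have e3 : (p : ℤ) * c.1 ⟨0, NeZero.pos p⟩ = (p : ℤ) * c'.1 ⟨0, NeZero.pos p⟩ := by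
            omega
          exact mul_left_cancel₀ (by exact_mod_cast hp.pos.ne' : (p : ℤ) ≠ 0) e3
        have hfun : c.1 = c'.1 := by
          funext j
          have e1 := c_repr p w c.1 c.2.1 (j : ℕ) j.isLt
          have e2 := c_repr p w c'.1 c'.2.1 (j : ℕ) j.isLt
          rw [Fin.eta] at e1 e2
          rw [e1, e2, hdv, hc0]
        simp only [Prod.mk.injEq]
        exact ⟨trivial, Subtype.ext hfun⟩
      · rintro ⟨ev, he⟩
        set k : Fin p := ⟨(-(gd p w ev)).val, ZMod.val_lt _⟩ with hk
        set d : Fin p → ℕ := (rotOne p)^[p - (k : ℕ)] ev with hd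
        have hds : ∑ i, d i = p * w - p - 1 := by rw [hd, rot_iter_sum]; exact he
        have hkv : (((k : ℕ)) : ZMod p) = -(gd p w ev) := by
          rw [hk]
          exact ZMod.natCast_rightInverse _
        have hdg : gd p w d = 0 := by
          rw [hd, gd_rot_iter p w ev hw2 he]
          have h1 : ((p - (k : ℕ) : ℕ) : ZMod p) = -(((k : ℕ)) : ZMod p) := by
            rw [Nat.cast_sub (le_of_lt k.isLt)]
            simp
          rw [h1, hkv]
          ring
        obtain ⟨c, hcP, hdc⟩ := exists_c p w d hw2 hds hdg
        refine ⟨(k, ⟨c, hcP⟩), ?_⟩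
        apply Subtype.ext
        show (rotOne p)^[(k : ℕ)] (dvec p w c) = ev
        rw [hdc, hd, ← Function.iterate_add_apply]
        have hkp : (k : ℕ) + (p - (k : ℕ)) = p := by omega
        rw [hkp]
        funext i
        rw [rot_iter_apply]
        congr 1
        simp
    have hcards := Nat.card_eq_of_bijective Φ hbij
    rw [Nat.card_prod, Nat.card_eq_fintype_card, Fintype.card_fin] at hcards
    clear_value Φ
    have harg : p * w - p - 1 + p - 1 = p * w - 2 := by
      clear hcards hbij Φ
      omega
    have final : Nat.card {d : Fin p → ℕ // ∑ i, d i = p * w - p - 1}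
        = (p * w - 2).choose (p - 1) :=
      (card_comp p (p * w - p - 1) hp.pos).trans
        (congrArg (fun m => Nat.choose m (p - 1)) harg)
    exact hcards.trans final



end Scopes
end

section
/- Let p be prime, w ≥ 1, and let E = {(k_1,…,k_p) ∈ ℕ^p : Σ k_i = pw − (p−1)} and, for 0 ≤ j ≤ p−1, E_j = {k ∈ E : Σ_{i=1}^{p} i·k_i ≡ j (mod p)}. Then the cyclic shift σ(k_1,…,k_p) = (k_p, k_1,…,k_{p−1}) maps E_j bijectively onto E_{j+1 mod p}; consequently |E_j| = (1/p)·C(pw, p−1) for every j. -/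
/-!
The cyclic shift adds the coordinate sum `n = p * w - (p - 1) ≡ 1 [MOD p]` to the weighted sum
`∑ (i + 1) * k i` modulo `p`, so it maps `E_j` into `E_{j+1}`, and the opposite shift maps
`E_{j+1}` back into `E_j`. Hence the `p` classes `E_j` are equinumerous, and since they partition
the `C(p + n - 1, n) = C(p * w, p - 1)` compositions of `n` into `p` parts, each has
`C(p * w, p - 1) / p` elements.
-/

open Finset

theorem Finset.Nat.card_antidiagonalTuple (p n : ℕ) :
    #(Finset.Nat.antidiagonalTuple p n) = (p + n - 1).choose n := by
  have hset : ((Finset.Nat.antidiagonalTuple p n : Finset (Fin p → ℕ)) : Set (Fin p → ℕ))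
      = {k | ∑ i, k i = n} := by
    ext k; simp [Finset.Nat.mem_antidiagonalTuple]
  rw [← Set.ncard_coe_finset, hset, ← Nat.card_coe_set_eq]
  calc Nat.card {k : Fin p → ℕ // ∑ i, k i = n}
      = Nat.card (Sym (Fin p) n) := (Nat.card_congr (Sym.equivNatSumOfFintype _ n)).symm
    _ = (p + n - 1).choose n := by
      rw [Nat.card_eq_fintype_card, Sym.card_sym_eq_choose, Fintype.card_fin]

variable {p : ℕ}

def weightedSum (k : Fin p → ℕ) : ℕ := ∑ i : Fin p, ((i : ℕ) + 1) * k i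

/-- `weightClass p (p * w - (p - 1)) j` is the paper's `E_j`. -/
def weightClass (p n j : ℕ) : Set (Fin p → ℕ) :=
  {k | ∑ i, k i = n ∧ weightedSum k % p = j % p}

theorem weightClass_eq_filter (p n j : ℕ) :
    weightClass p n j = ↑{k ∈ Finset.Nat.antidiagonalTuple p n | weightedSum k % p = j % p} := by
  ext k; simp [weightClass, Finset.Nat.mem_antidiagonalTuple]

section CyclicShift

variable [NeZero p]

def cyclicShift {α : Type*} (k : Fin p → α) : Fin p → α := fun i => k (i - 1)

theorem cyclicShift_apply {α : Type*} (k : Fin p → α) (i : Fin p) :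
    cyclicShift k i = k ⟨((i : ℕ) + (p - 1)) % p, Nat.mod_lt _ (NeZero.pos p)⟩ := by
  refine congrArg k (Fin.ext ?_)
  rw [Fin.sub_def, Fin.val_one']
  rcases (NeZero.one_le (n := p)).eq_or_lt with rfl | hp
  · simp only [Nat.mod_one]
  · rw [Nat.mod_eq_of_lt hp, add_comm]

@[simp]
theorem cyclicShift_apply_add_one {α : Type*} (k : Fin p → α) (i : Fin p) :
    cyclicShift k (i + 1) = k i := by
  simp [cyclicShift]

theorem cyclicShift_add_one {α : Type*} (k : Fin p → α) :
    cyclicShift (fun i => k (i + 1)) = k := by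
  funext i
  simp [cyclicShift]

theorem sum_cyclicShift {M : Type*} [AddCommMonoid M] (k : Fin p → M) :
    ∑ i, cyclicShift k i = ∑ i, k i :=
  Equiv.sum_comp (Equiv.subRight 1) k

theorem weightedSum_cyclicShift_modEq (k : Fin p → ℕ) :
    weightedSum (cyclicShift k) ≡ weightedSum k + ∑ i, k i [MOD p] := by
  rw [← ZMod.natCast_eq_natCast_iff]
  have reindex : weightedSum (cyclicShift k) = ∑ i : Fin p, (((i + 1 : Fin p) : ℕ) + 1) * k i := by
    rw [weightedSum,
      ← Equiv.sum_comp (Equiv.addRight 1) (fun i : Fin p => ((i : ℕ) + 1) * cyclicShift k i)]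
    simp
  have hcast : ∀ i : Fin p, (((i + 1 : Fin p) : ℕ) : ZMod p) = (i : ℕ) + 1 := by
    intro i
    rw [Fin.val_add, ZMod.natCast_mod]
    simp
  rw [reindex, weightedSum]
  push_cast
  simp only [hcast, ← Finset.sum_add_distrib]
  congr 1; funext i; ring

theorem bijOn_cyclicShift_weightClass {n : ℕ} (hn : n ≡ 1 [MOD p]) (j : ℕ) :
    Set.BijOn cyclicShift (weightClass p n j) (weightClass p n (j + 1)) := by
  have weightedSum_succ : ∀ {k : Fin p → ℕ} {r : ℕ}, ∑ i, k i = n →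
      weightedSum k ≡ r [MOD p] → weightedSum (cyclicShift k) ≡ r + 1 [MOD p] :=
    fun hsum hw => (weightedSum_cyclicShift_modEq _).trans (hsum ▸ hw.add hn)
  refine Set.InvOn.bijOn (f' := fun k i => k (i + 1))
    ⟨fun k _ => funext (cyclicShift_apply_add_one k), fun k _ => cyclicShift_add_one k⟩ ?_ ?_
  · rintro k ⟨hsum, hw⟩
    exact ⟨(sum_cyclicShift k).trans hsum, weightedSum_succ hsum hw⟩
  · rintro k ⟨hsum, hw⟩
    have hsum' : ∑ i, k (i + 1) = n := (Equiv.sum_comp (Equiv.addRight 1) k).trans hsum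
    refine ⟨hsum', Nat.ModEq.add_right_cancel' 1 ?_⟩
    have hshifted := weightedSum_succ hsum' rfl
    rw [cyclicShift_add_one] at hshifted
    exact hshifted.symm.trans hw

theorem natCard_weightClass_eq {n : ℕ} (hn : n ≡ 1 [MOD p]) (j : ℕ) :
    Nat.card (weightClass p n j) = Nat.card (weightClass p n 0) := by
  induction j with
  | zero => rfl
  | succ j ih => rw [← ih, Nat.card_congr ((bijOn_cyclicShift_weightClass hn j).equiv _)]

theorem sum_natCard_weightClass (n : ℕ) :
    ∑ r ∈ range p, Nat.card (weightClass p n r) = #(Finset.Nat.antidiagonalTuple p n) := by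
  rw [card_eq_sum_card_fiberwise (f := fun k => weightedSum k % p) (t := range p)
    fun k _ => mem_coe.2 (mem_range.2 (Nat.mod_lt _ (NeZero.pos p)))]
  refine sum_congr rfl fun r hr => ?_
  rw [weightClass_eq_filter, Nat.card_coe_set_eq, Set.ncard_coe_finset,
    Nat.mod_eq_of_lt (mem_range.1 hr)]

theorem mul_natCard_weightClass {n : ℕ} (hn : n ≡ 1 [MOD p]) (j : ℕ) :
    p * Nat.card (weightClass p n j) = (p + n - 1).choose n := by
  rw [← Finset.Nat.card_antidiagonalTuple, ← sum_natCard_weightClass,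
    sum_congr rfl fun r _ => natCard_weightClass_eq hn r, natCard_weightClass_eq hn j,
    sum_const, card_range, smul_eq_mul]

theorem mul_sub_pred_modEq_one {w : ℕ} (hw : 1 ≤ w) : p * w - (p - 1) ≡ 1 [MOD p] := by
  obtain ⟨w, rfl⟩ := Nat.exists_eq_add_of_le' hw
  have hp : 1 ≤ p := NeZero.one_le
  rw [show p * (w + 1) - (p - 1) = p * w + 1 by rw [mul_add_one]; omega]
  exact Nat.mul_add_mod_self_left _ _ _

end CyclicShift

/-- Let `p` be prime, `w ≥ 1`, and for `j : ℕ` let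
`E_j = {k ∈ ℕ^p : ∑ k_i = p*w - (p-1), ∑ i*k_i ≡ j (mod p)}` (with `1`-based
coefficients `i`). The cyclic shift `σ(k)_i = k_{i-1}` (indices mod `p`) maps
`E_j` bijectively onto `E_{j+1 mod p}`; consequently
`|E_j| = (1/p) * C(p*w, p-1)` for every `j`. -/
theorem cyclic_shift_on_E (p w : ℕ) (hp : p.Prime) (hw : 1 ≤ w) :
    (∀ j : ℕ, Set.BijOn
        (fun (k : Fin p → ℕ) (i : Fin p) =>
          k ⟨((i : ℕ) + (p - 1)) % p, Nat.mod_lt _ hp.pos⟩)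
        {k : Fin p → ℕ | ∑ i : Fin p, k i = p * w - (p - 1)
          ∧ (∑ i : Fin p, ((i : ℕ) + 1) * k i) % p = j % p}
        {k : Fin p → ℕ | ∑ i : Fin p, k i = p * w - (p - 1)
          ∧ (∑ i : Fin p, ((i : ℕ) + 1) * k i) % p = (j + 1) % p})
    ∧ (∀ j : ℕ, p * Nat.card {k : Fin p → ℕ // ∑ i : Fin p, k i = p * w - (p - 1)
          ∧ (∑ i : Fin p, ((i : ℕ) + 1) * k i) % p = j % p}
        = (p * w).choose (p - 1)) := by
  have : NeZero p := ⟨hp.ne_zero⟩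
  have hn := mul_sub_pred_modEq_one (p := p) hw
  have hshift : (fun (k : Fin p → ℕ) (i : Fin p) =>
      k ⟨((i : ℕ) + (p - 1)) % p, Nat.mod_lt _ hp.pos⟩) = cyclicShift :=
    funext fun k => funext fun i => (cyclicShift_apply k i).symm
  refine ⟨fun j => hshift ▸ bijOn_cyclicShift_weightClass hn j, fun j => ?_⟩
  have hle : p ≤ p * w := Nat.le_mul_of_pos_right p hw
  have hcard := mul_natCard_weightClass hn j
  generalize p * w = m at hle hcard ⊢
  rwa [show p + (m - (p - 1)) - 1 = m by have := hp.pos; omega,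
    Nat.choose_symm (k := p - 1) (by omega)] at hcard
end

section
/- For every positive integer n, the number of 3-core partitions of n equals the number of 3-core partitions of 4n+1. Explicitly, identifying 3-cores of n with integer pairs (x,y) ∈ ℤ² satisfying 3x² + 3y² + 3xy + x + 2y = n, the map (x,y) ↦ (−2x, −2y−1) is a bijection from the solution set for n to the solution set for 4n+1. -/
/-!
Write `f(x, y) = 3x² + 3y² + 3xy + x + 2y`. The substitution `(x, y) ↦ (-2x, -2y - 1)` gives the
identity `f(-2x, -2y - 1) = 4 f(x, y) + 1`, and since `f(x, y) ≡ y (x + 1) (mod 2)`, a pair has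
odd size exactly when `x` is even and `y` is odd, i.e. exactly when it lies in the image of the
substitution.
-/

def threeCoreSize (q : ℤ × ℤ) : ℤ :=
  3 * q.1 ^ 2 + 3 * q.2 ^ 2 + 3 * q.1 * q.2 + q.1 + 2 * q.2

def doubleShift (q : ℤ × ℤ) : ℤ × ℤ := (-2 * q.1, -2 * q.2 - 1)

theorem threeCoreSize_doubleShift (q : ℤ × ℤ) :
    threeCoreSize (doubleShift q) = 4 * threeCoreSize q + 1 := by
  simp only [threeCoreSize, doubleShift]
  ring

theorem doubleShift_injective : Function.Injective doubleShift := by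
  rintro ⟨x₁, y₁⟩ ⟨x₂, y₂⟩ h
  simp only [doubleShift, Prod.mk.injEq] at h
  ext <;> omega

theorem mem_range_doubleShift_iff (q : ℤ × ℤ) :
    q ∈ Set.range doubleShift ↔ Even q.1 ∧ Odd q.2 := by
  constructor
  · rintro ⟨p, rfl⟩
    exact ⟨⟨-p.1, by simp only [doubleShift]; ring⟩, ⟨-p.2 - 1, by simp only [doubleShift]; ring⟩⟩
  · rintro ⟨⟨a, ha⟩, ⟨b, hb⟩⟩
    refine ⟨(-a, -b - 1), Prod.ext ?_ ?_⟩ <;> simp only [doubleShift] <;> linarith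

theorem odd_threeCoreSize_iff (q : ℤ × ℤ) :
    Odd (threeCoreSize q) ↔ Even q.1 ∧ Odd q.2 := by
  have hsplit : threeCoreSize q =
      2 * (q.1 ^ 2 + q.2 ^ 2 + q.1 * q.2) + q.1 * (q.1 + 1) + q.2 * (q.2 + 1) + q.2 * (q.1 + 1) := by
    simp only [threeCoreSize]
    ring
  rw [hsplit]
  simp only [← Int.not_even_iff_odd, Int.even_add, even_two, Even.mul_right, Int.even_mul,
    even_add_one, true_iff]
  tauto

theorem bijOn_doubleShift (m : ℤ) :
    Set.BijOn doubleShift {q | threeCoreSize q = m} {q | threeCoreSize q = 4 * m + 1} := by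
  refine ⟨fun q hq => ?_, doubleShift_injective.injOn, fun q hq => ?_⟩
  · simp only [Set.mem_ofPred_eq, threeCoreSize_doubleShift] at hq ⊢
    rw [hq]
  · have hodd : Odd (threeCoreSize q) := ⟨2 * m, by rw [Set.mem_ofPred_eq.mp hq]; ring⟩
    obtain ⟨p, rfl⟩ := (mem_range_doubleShift_iff q).mpr ((odd_threeCoreSize_iff q).mp hodd)
    refine ⟨p, ?_, rfl⟩
    simp only [Set.mem_ofPred_eq, threeCoreSize_doubleShift] at hq ⊢
    omega

theorem threecores_of_n_and_4n1_general (n : ℕ) :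
    Set.BijOn (fun q : ℤ × ℤ => (-2 * q.1, -2 * q.2 - 1))
      {q : ℤ × ℤ | 3 * q.1 ^ 2 + 3 * q.2 ^ 2 + 3 * q.1 * q.2 + q.1 + 2 * q.2 = n}
      {q : ℤ × ℤ | 3 * q.1 ^ 2 + 3 * q.2 ^ 2 + 3 * q.1 * q.2 + q.1 + 2 * q.2
        = 4 * n + 1}
    ∧ Nat.card {q : ℤ × ℤ //
          3 * q.1 ^ 2 + 3 * q.2 ^ 2 + 3 * q.1 * q.2 + q.1 + 2 * q.2 = n}
      = Nat.card {q : ℤ × ℤ //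
          3 * q.1 ^ 2 + 3 * q.2 ^ 2 + 3 * q.1 * q.2 + q.1 + 2 * q.2 = 4 * n + 1} :=
  ⟨bijOn_doubleShift n, Nat.card_congr ((bijOn_doubleShift n).equiv _)⟩

/-- For every positive integer `n`, the number of 3-core
partitions of `n` equals the number of 3-core partitions of `4n+1`;
identifying 3-cores of `n` with pairs `(x, y) ∈ ℤ²` satisfying
`3x² + 3y² + 3xy + x + 2y = n`, the map `(x, y) ↦ (-2x, -2y-1)` is a bijection
between the solution sets for `n` and for `4n+1`. -/
theorem threecores_of_n_and_4n1 (n : ℕ) (hn : 0 < n) :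
    Set.BijOn (fun q : ℤ × ℤ => (-2 * q.1, -2 * q.2 - 1))
      {q : ℤ × ℤ | 3 * q.1 ^ 2 + 3 * q.2 ^ 2 + 3 * q.1 * q.2 + q.1 + 2 * q.2 = n}
      {q : ℤ × ℤ | 3 * q.1 ^ 2 + 3 * q.2 ^ 2 + 3 * q.1 * q.2 + q.1 + 2 * q.2
        = 4 * n + 1}
    ∧ Nat.card {q : ℤ × ℤ //
          3 * q.1 ^ 2 + 3 * q.2 ^ 2 + 3 * q.1 * q.2 + q.1 + 2 * q.2 = n}
      = Nat.card {q : ℤ × ℤ //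
          3 * q.1 ^ 2 + 3 * q.2 ^ 2 + 3 * q.1 * q.2 + q.1 + 2 * q.2 = 4 * n + 1} :=
  threecores_of_n_and_4n1_general n
end

section
/- Let k be a positive integer with k ≢ 0 (mod 3), and write k = 3q + ε with ε ∈ {−1, 1}, q ∈ ℕ. Then the map (x,y) ↦ (εkx, ε(ky+q)) is an injection from the set of integer solutions of 3x² + 3y² + 3xy + x + 2y = n into the set of integer solutions of 3x² + 3y² + 3xy + x + 2y = k²n + (k²−1)/3. -/
/-!
With the characteristic vector `v = (-x-y, x, y)` of a 3-core and `w = (-1/3, 0, 1/3)`, one has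
`3 Q(x, y) + 1 = (9/2) |v + w|²`, where `Q(x, y) = 3x² + 3y² + 3xy + x + 2y`.
Since `εk = 1 + 3εq`, scaling `v + w` by `εk` gives `v' + w`, where `v' = εk v + εq (-1, 0, 1)`
is again an integer vector of coordinate sum zero, with last two coordinates `(εkx, ε(ky + q))`.
Hence `3 Q' + 1 = k² (3 Q + 1)`, which is the claim because `3m = k² - 1`; the map is injective
because `εk ≠ 0`.
-/

def threeCoreForm (p : ℤ × ℤ) : ℤ :=
  3 * p.1 ^ 2 + 3 * p.2 ^ 2 + 3 * p.1 * p.2 + p.1 + 2 * p.2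

theorem threeCoreForm_dilate {k q ε : ℤ} (hε : ε ^ 2 = 1) (hkq : k = 3 * q + ε) (p : ℤ × ℤ) :
    3 * threeCoreForm (ε * k * p.1, ε * (k * p.2 + q)) + 1 =
      k ^ 2 * (3 * threeCoreForm p + 1) := by
  obtain ⟨x, y⟩ := p
  subst hkq
  unfold threeCoreForm
  linear_combination (9 * (3 * q + ε) ^ 2 * (x ^ 2 + y ^ 2 + x * y) + 9 * (3 * q + ε) * q * x
    + 18 * (3 * q + ε) * q * y + 9 * q ^ 2 - 1) * hε

theorem injective_mul_mul_add {a k q : ℤ} (ha : a ≠ 0) (hk : k ≠ 0) :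
    Function.Injective fun p : ℤ × ℤ => (a * k * p.1, a * (k * p.2 + q)) := by
  rintro ⟨x, y⟩ ⟨x', y'⟩ h
  simp only [Prod.mk.injEq] at h ⊢
  exact ⟨mul_left_cancel₀ (mul_ne_zero ha hk) h.1,
    mul_left_cancel₀ hk (add_right_cancel (mul_left_cancel₀ ha h.2))⟩

theorem threecore_injection_general (k q ε n m : ℤ)
    (hε : ε = 1 ∨ ε = -1) (hkq : k = 3 * q + ε)
    (hm : 3 * m = k ^ 2 - 1) :
    Set.InjOn (fun p : ℤ × ℤ => (ε * k * p.1, ε * (k * p.2 + q)))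
      {p : ℤ × ℤ | 3 * p.1 ^ 2 + 3 * p.2 ^ 2 + 3 * p.1 * p.2 + p.1 + 2 * p.2 = n}
    ∧ Set.MapsTo (fun p : ℤ × ℤ => (ε * k * p.1, ε * (k * p.2 + q)))
      {p : ℤ × ℤ | 3 * p.1 ^ 2 + 3 * p.2 ^ 2 + 3 * p.1 * p.2 + p.1 + 2 * p.2 = n}
      {p : ℤ × ℤ | 3 * p.1 ^ 2 + 3 * p.2 ^ 2 + 3 * p.1 * p.2 + p.1 + 2 * p.2
        = k ^ 2 * n + m} := by
  have hε_sq : ε ^ 2 = 1 := by rcases hε with rfl | rfl <;> norm_num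
  refine ⟨(injective_mul_mul_add (by omega) (by omega)).injOn,
    fun p (hp : threeCoreForm p = n) => ?_⟩
  show threeCoreForm _ = _
  have h := threeCoreForm_dilate hε_sq hkq p
  rw [hp] at h
  linarith

/-- Let `k` be a positive integer with `k ≢ 0 (mod 3)`, written
`k = 3q + ε` with `ε ∈ {-1, 1}` and `q ≥ 0`, and let `m = (k² - 1)/3`. Then
`(x, y) ↦ (ε*k*x, ε*(k*y + q))` is an injection from the integer solutions of
`3x² + 3y² + 3xy + x + 2y = n` into those of
`3x² + 3y² + 3xy + x + 2y = k²*n + (k² - 1)/3`. -/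
theorem threecore_injection (k q ε n m : ℤ) (hk : 0 < k)
    (hε : ε = 1 ∨ ε = -1) (hq : 0 ≤ q) (hkq : k = 3 * q + ε)
    (hm : 3 * m = k ^ 2 - 1) :
    Set.InjOn (fun p : ℤ × ℤ => (ε * k * p.1, ε * (k * p.2 + q)))
      {p : ℤ × ℤ | 3 * p.1 ^ 2 + 3 * p.2 ^ 2 + 3 * p.1 * p.2 + p.1 + 2 * p.2 = n}
    ∧ Set.MapsTo (fun p : ℤ × ℤ => (ε * k * p.1, ε * (k * p.2 + q)))
      {p : ℤ × ℤ | 3 * p.1 ^ 2 + 3 * p.2 ^ 2 + 3 * p.1 * p.2 + p.1 + 2 * p.2 = n}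
      {p : ℤ × ℤ | 3 * p.1 ^ 2 + 3 * p.2 ^ 2 + 3 * p.1 * p.2 + p.1 + 2 * p.2
        = k ^ 2 * n + m} :=
  threecore_injection_general k q ε n m hε hkq hm
end

section
/- For every nonnegative integer n, the number of integer pairs (x,y) with 5x² + 5y² + 2x + 4y = n equals the number of integer pairs with 5x² + 5y² + 2x + 4y = 2n+1; an explicit bijection is (x,y) ↦ (y − x, −x − y − 1). -/
/-! The substitution `(x, y) ↦ (y - x, -x - y - 1)` satisfies the polynomial identity
`Q(y - x, -x - y - 1) = 2 Q(x, y) + 1` for `Q(x, y) = 5x² + 5y² + 2x + 4y`. It is injective, and its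
image is exactly the set of pairs `(a, b)` with `a + b` odd; since `Q(a, b) ≡ a + b (mod 2)`,
every solution of `Q = 2n + 1` lies in that image. -/

namespace SelfConjugateFiveCore

def quadForm (p : ℤ × ℤ) : ℤ := 5 * p.1 ^ 2 + 5 * p.2 ^ 2 + 2 * p.1 + 4 * p.2

def doubleShift (p : ℤ × ℤ) : ℤ × ℤ := (p.2 - p.1, -p.1 - p.2 - 1)

theorem quadForm_doubleShift (p : ℤ × ℤ) : quadForm (doubleShift p) = 2 * quadForm p + 1 := by
  simp only [quadForm, doubleShift]
  ring

theorem doubleShift_injective : Function.Injective doubleShift := by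
  rintro ⟨x, y⟩ ⟨x', y'⟩ h
  simp only [doubleShift, Prod.mk.injEq] at h
  ext <;> omega

theorem odd_quadForm_iff (q : ℤ × ℤ) : Odd (quadForm q) ↔ Odd (q.1 + q.2) := by
  simp [quadForm, parity_simps, Int.odd_mul, show Odd (5 : ℤ) by decide,
    show Even (4 : ℤ) by decide]

theorem exists_doubleShift_eq_of_odd_add {q : ℤ × ℤ} (h : Odd (q.1 + q.2)) :
    ∃ p, doubleShift p = q := by
  obtain ⟨k, hk⟩ := h
  refine ⟨(-k - 1, q.1 - k - 1), ?_⟩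
  ext <;> simp only [doubleShift] <;> omega

theorem bijOn_doubleShift (m : ℤ) :
    Set.BijOn doubleShift {p | quadForm p = m} {p | quadForm p = 2 * m + 1} := by
  refine ⟨fun p hp => ?_, doubleShift_injective.injOn, fun q hq => ?_⟩
  · show quadForm (doubleShift p) = 2 * m + 1
    rw [quadForm_doubleShift, show quadForm p = m from hp]
  · have hodd : Odd (quadForm q) := ⟨m, hq⟩
    obtain ⟨p, rfl⟩ := exists_doubleShift_eq_of_odd_add ((odd_quadForm_iff q).mp hodd)
    refine ⟨p, ?_, rfl⟩
    have hq' : 2 * quadForm p + 1 = 2 * m + 1 := (quadForm_doubleShift p).symm.trans hq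
    show quadForm p = m
    omega

end SelfConjugateFiveCore

/-- For every `n ∈ ℕ`, the number of integer pairs `(x, y)` with
`5x² + 5y² + 2x + 4y = n` equals the number with `5x² + 5y² + 2x + 4y = 2n+1`;
an explicit bijection is `(x, y) ↦ (y - x, -x - y - 1)`. -/
theorem selfconjugate_5cores_n_2n1 (n : ℕ) :
    Set.BijOn (fun p : ℤ × ℤ => (p.2 - p.1, -p.1 - p.2 - 1))
      {p : ℤ × ℤ | 5 * p.1 ^ 2 + 5 * p.2 ^ 2 + 2 * p.1 + 4 * p.2 = n}
      {p : ℤ × ℤ | 5 * p.1 ^ 2 + 5 * p.2 ^ 2 + 2 * p.1 + 4 * p.2 = 2 * n + 1}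
    ∧ Nat.card {p : ℤ × ℤ // 5 * p.1 ^ 2 + 5 * p.2 ^ 2 + 2 * p.1 + 4 * p.2 = n}
      = Nat.card {p : ℤ × ℤ //
          5 * p.1 ^ 2 + 5 * p.2 ^ 2 + 2 * p.1 + 4 * p.2 = 2 * n + 1} := by
  have hbij := SelfConjugateFiveCore.bijOn_doubleShift n
  exact ⟨hbij, Nat.card_congr (hbij.equiv _)⟩
end

section
/- For every nonnegative integer n, the map (x,y) ↦ (−2x − y − 1, x − 2y − 1) is a bijection from the set of integer pairs (x,y) with 5x² + 5y² + 2x + 4y = n onto the set of integer pairs with 5x² + 5y² + 2x + 4y = 5n + 4. -/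
/-!
With `u = 5x + 1` and `v = 5y + 2` one has `u² + v² = 5 (5x² + 5y² + 2x + 4y + 1)`, and in these
coordinates the map `(x, y) ↦ (-2x - y - 1, x - 2y - 1)` is multiplication of `u + v i` by the
Gaussian integer `-2 + i` of norm `5`; this takes size `n` to size `5n + 4`. Conversely, a pair of
size `≡ 4 (mod 5)` satisfies the linear congruence `x + 2y ≡ 2 (mod 5)` that cuts out the image.
-/

namespace SelfConjugateFiveCore

def size (p : ℤ × ℤ) : ℤ := 5 * p.1 ^ 2 + 5 * p.2 ^ 2 + 2 * p.1 + 4 * p.2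

def step (p : ℤ × ℤ) : ℤ × ℤ := (-2 * p.1 - p.2 - 1, p.1 - 2 * p.2 - 1)

theorem size_step (p : ℤ × ℤ) : size (step p) = 5 * size p + 4 := by
  simp only [size, step]
  ring

theorem step_injective : Function.Injective step := by
  rintro ⟨x, y⟩ ⟨x', y'⟩ h
  simp only [step, Prod.mk.injEq] at h
  ext <;> omega

theorem mem_range_step_of_dvd {p : ℤ × ℤ} (h : 5 ∣ p.1 + 2 * p.2 - 2) : p ∈ Set.range step := by
  obtain ⟨k, hk⟩ := h
  refine ⟨(p.2 - 2 * k - 1, -k - 1), ?_⟩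
  ext <;> simp only [step] <;> omega

theorem five_dvd_of_size_eq {p : ℤ × ℤ} {m : ℤ} (h : size p = 5 * m + 4) :
    5 ∣ p.1 + 2 * p.2 - 2 := by
  have h2 : 2 * (p.1 + 2 * p.2 - 2) = 5 * (m - p.1 ^ 2 - p.2 ^ 2) := by
    simp only [size] at h
    linear_combination h
  omega

theorem bijOn_step (m : ℤ) : Set.BijOn step {p | size p = m} {p | size p = 5 * m + 4} := by
  refine ⟨fun p hp => ?_, step_injective.injOn, fun p hp => ?_⟩
  · show size (step p) = 5 * m + 4
    rw [size_step, hp]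
  · obtain ⟨p', rfl⟩ := mem_range_step_of_dvd (five_dvd_of_size_eq hp)
    refine ⟨p', ?_, rfl⟩
    have hp' : 5 * size p' + 4 = 5 * m + 4 := (size_step p').symm.trans hp
    show size p' = m
    omega

end SelfConjugateFiveCore

/-- For every `n ∈ ℕ`, the map `(x, y) ↦ (-2x - y - 1, x - 2y - 1)`
is a bijection from the integer pairs with `5x² + 5y² + 2x + 4y = n` onto the
integer pairs with `5x² + 5y² + 2x + 4y = 5n + 4`. -/
theorem selfconjugate_5cores_n_5n4 (n : ℕ) :
    Set.BijOn (fun p : ℤ × ℤ => (-2 * p.1 - p.2 - 1, p.1 - 2 * p.2 - 1))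
      {p : ℤ × ℤ | 5 * p.1 ^ 2 + 5 * p.2 ^ 2 + 2 * p.1 + 4 * p.2 = n}
      {p : ℤ × ℤ | 5 * p.1 ^ 2 + 5 * p.2 ^ 2 + 2 * p.1 + 4 * p.2 = 5 * n + 4} :=
  SelfConjugateFiveCore.bijOn_step n
end

section
/- For every nonnegative integer n, the map (x,y,z) ↦ (−2z−1, 2x, −2y−1) is a bijection from the set of integer triples (x,y,z) with 7x² + 7y² + 7z² + 2x + 4y + 6z = n onto the set of integer triples with 7x² + 7y² + 7z² + 2x + 4y + 6z = 4n + 6. -/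
/-!
The substitution `(x, y, z) ↦ (-2z-1, 2x, -2y-1)` multiplies the form by 4 and adds 6, so it maps
solutions for `n` to solutions for `4n + 6`, and it is clearly injective. Conversely, modulo 4
the form is `a² - b² + c²`; since squares are `0` or `1` mod 4, a solution for `4n + 6 ≡ 2`
has `a, c` odd and `b` even, hence lies in the image of the substitution.
-/

namespace SelfConjugateSevenCore

def form (p : ℤ × ℤ × ℤ) : ℤ :=
  7 * p.1 ^ 2 + 7 * p.2.1 ^ 2 + 7 * p.2.2 ^ 2 + 2 * p.1 + 4 * p.2.1 + 6 * p.2.2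

def step (p : ℤ × ℤ × ℤ) : ℤ × ℤ × ℤ :=
  (-2 * p.2.2 - 1, 2 * p.1, -2 * p.2.1 - 1)

theorem form_step (p : ℤ × ℤ × ℤ) : form (step p) = 4 * form p + 6 := by
  simp only [form, step]
  ring

theorem step_injective : Function.Injective step := by
  rintro ⟨x, y, z⟩ ⟨x', y', z'⟩ h
  simp only [step, Prod.mk.injEq] at h
  obtain ⟨hz, hx, hy⟩ := h
  simp only [Prod.mk.injEq]
  omega

theorem parity_of_form_emod_four {a b c : ℤ} (h : form (a, b, c) % 4 = 2) :
    Odd a ∧ Even b ∧ Odd c := by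
  simp only [form] at h
  rcases Int.even_or_odd' a with ⟨k, rfl | rfl⟩ <;>
  rcases Int.even_or_odd' b with ⟨l, rfl | rfl⟩ <;>
  rcases Int.even_or_odd' c with ⟨m, rfl | rfl⟩ <;>
  ring_nf at h <;>
  first
  | exact ⟨odd_two_mul_add_one k, even_two_mul l, odd_two_mul_add_one m⟩
  | omega

theorem exists_step_eq {a b c : ℤ} (ha : Odd a) (hb : Even b) (hc : Odd c) :
    ∃ p, step p = (a, b, c) := by
  obtain ⟨k, rfl⟩ := ha
  obtain ⟨x, rfl⟩ := hb
  obtain ⟨m, rfl⟩ := hc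
  exact ⟨(x, -m - 1, -k - 1), by simp only [step, Prod.mk.injEq]; omega⟩

end SelfConjugateSevenCore

open SelfConjugateSevenCore in
/-- For every `n ∈ ℕ`, the map `(x,y,z) ↦ (-2z-1, 2x, -2y-1)` is
a bijection from the integer triples with `7x² + 7y² + 7z² + 2x + 4y + 6z = n`
onto the integer triples satisfying the same form equal to `4n + 6`. -/
theorem selfconjugate_7cores_n_4n6 (n : ℕ) :
    Set.BijOn
      (fun p : ℤ × ℤ × ℤ => ((-2 * p.2.2 - 1, 2 * p.1, -2 * p.2.1 - 1) : ℤ × ℤ × ℤ))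
      {p : ℤ × ℤ × ℤ | 7 * p.1 ^ 2 + 7 * p.2.1 ^ 2 + 7 * p.2.2 ^ 2
        + 2 * p.1 + 4 * p.2.1 + 6 * p.2.2 = n}
      {p : ℤ × ℤ × ℤ | 7 * p.1 ^ 2 + 7 * p.2.1 ^ 2 + 7 * p.2.2 ^ 2
        + 2 * p.1 + 4 * p.2.1 + 6 * p.2.2 = 4 * n + 6} := by
  change Set.BijOn step {p | form p = n} {p | form p = 4 * n + 6}
  refine ⟨fun p (hp : form p = n) => ?_, step_injective.injOn, ?_⟩
  · show form (step p) = 4 * n + 6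
    rw [form_step, hp]
  · rintro ⟨a, b, c⟩ (hq : form (a, b, c) = 4 * n + 6)
    have hq4 : form (a, b, c) % 4 = 2 := by omega
    obtain ⟨ha, hb, hc⟩ := parity_of_form_emod_four hq4
    obtain ⟨p, hp⟩ := exists_step_eq ha hb hc
    have hform : 4 * form p + 6 = 4 * n + 6 := by rw [← form_step, hp, hq]
    exact ⟨p, show form p = n by omega, hp⟩
end

section
/- For every nonnegative integer n, the map (x,y,z,w) ↦ (−2w−1, 2x, −2z−1, 2y) is an injection from the set of integer 4-tuples (x,y,z,w) satisfying 9x² + 9y² + 9z² + 9w² + 2x + 4y + 6z + 8w = n into the set of 4-tuples satisfying the same quadratic form equal to 4n + 10. -/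
/-!
Write `Q(x,y,z,w) = 9x² + 9y² + 9z² + 9w² + 2x + 4y + 6z + 8w`. Completing squares,
`9 Q + 30 = (9x+1)² + (9y+2)² + (9z+3)² + (9w+4)²`, and the map
`(x,y,z,w) ↦ (-2w-1, 2x, -2z-1, 2y)` sends these four shifted coordinates to
`-2(9w+4), 2(9x+1), -2(9z+3), 2(9y+2)`: twice a signed permutation of them. Hence it multiplies
`9 Q + 30` by 4, that is `Q ↦ 4 Q + 10`; being affine with invertible linear part, it is injective.
-/

namespace SelfConjugateNineCore

def quadForm (p : ℤ × ℤ × ℤ × ℤ) : ℤ :=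
  9 * p.1 ^ 2 + 9 * p.2.1 ^ 2 + 9 * p.2.2.1 ^ 2 + 9 * p.2.2.2 ^ 2
    + 2 * p.1 + 4 * p.2.1 + 6 * p.2.2.1 + 8 * p.2.2.2

def doubling (p : ℤ × ℤ × ℤ × ℤ) : ℤ × ℤ × ℤ × ℤ :=
  (-2 * p.2.2.2 - 1, 2 * p.1, -2 * p.2.2.1 - 1, 2 * p.2.1)

theorem quadForm_doubling (p : ℤ × ℤ × ℤ × ℤ) :
    quadForm (doubling p) = 4 * quadForm p + 10 := by
  simp only [quadForm, doubling]
  ring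

theorem doubling_injective : Function.Injective doubling := by
  rintro ⟨x, y, z, w⟩ ⟨x', y', z', w'⟩ h
  simp only [doubling, Prod.mk.injEq] at h ⊢
  omega

end SelfConjugateNineCore

/-- For every `n ∈ ℕ`, the map
`(x,y,z,w) ↦ (-2w-1, 2x, -2z-1, 2y)` is an injection from the integer 4-tuples
with `9x² + 9y² + 9z² + 9w² + 2x + 4y + 6z + 8w = n` into the 4-tuples
satisfying the same quadratic form equal to `4n + 10`. -/
theorem selfconjugate_9cores_injection (n : ℕ) :
    Set.InjOn
      (fun p : ℤ × ℤ × ℤ × ℤ =>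
        ((-2 * p.2.2.2 - 1, 2 * p.1, -2 * p.2.2.1 - 1, 2 * p.2.1) : ℤ × ℤ × ℤ × ℤ))
      {p : ℤ × ℤ × ℤ × ℤ | 9 * p.1 ^ 2 + 9 * p.2.1 ^ 2 + 9 * p.2.2.1 ^ 2
        + 9 * p.2.2.2 ^ 2 + 2 * p.1 + 4 * p.2.1 + 6 * p.2.2.1 + 8 * p.2.2.2 = n}
    ∧ Set.MapsTo
      (fun p : ℤ × ℤ × ℤ × ℤ =>
        ((-2 * p.2.2.2 - 1, 2 * p.1, -2 * p.2.2.1 - 1, 2 * p.2.1) : ℤ × ℤ × ℤ × ℤ))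
      {p : ℤ × ℤ × ℤ × ℤ | 9 * p.1 ^ 2 + 9 * p.2.1 ^ 2 + 9 * p.2.2.1 ^ 2
        + 9 * p.2.2.2 ^ 2 + 2 * p.1 + 4 * p.2.1 + 6 * p.2.2.1 + 8 * p.2.2.2 = n}
      {p : ℤ × ℤ × ℤ × ℤ | 9 * p.1 ^ 2 + 9 * p.2.1 ^ 2 + 9 * p.2.2.1 ^ 2
        + 9 * p.2.2.2 ^ 2 + 2 * p.1 + 4 * p.2.1 + 6 * p.2.2.1 + 8 * p.2.2.2
        = 4 * n + 10} := by
  refine ⟨SelfConjugateNineCore.doubling_injective.injOn, fun p hp => ?_⟩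
  change SelfConjugateNineCore.quadForm p = n at hp
  change SelfConjugateNineCore.quadForm (SelfConjugateNineCore.doubling p) = 4 * n + 10
  rw [SelfConjugateNineCore.quadForm_doubling, hp]
end
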